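/- arXiv:2305.11289 — 6 statements merged into one kernel-verified Lean document; each statement's English description precedes it below -/
import Mathlib

section
/- The number of semi-standard Young tableaux of shape λ = (λ₁ ≥ ... ≥ λ_r ≥ 0) with entries in {1,...,r} equals the product over all boxes u of λ of (r + c(u))/h(u), where c(u) = j - i is the content of the box in row i and column j, and h(u) is the hook length of u. -/
def IsPartition (r : ℕ) (μ : ℕ → ℕ) : Prop :=
  (∀ i j, i ≤ j → μ j ≤ μ i) ∧ ∀ i, r ≤ i → μ i = 0

def ZeroOutside (μ : ℕ → ℕ) (T : ℕ → ℕ → ℕ) : Prop :=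
  ∀ i j, ¬ j < μ i → T i j = 0

/-- A semistandard filling of the Young diagram of `μ` (cells `(i,j)` with `j < μ i`)
with entries in `{1,…,r}`: weakly increasing along rows, strictly increasing down columns. -/
def IsSSYT (μ : ℕ → ℕ) (r : ℕ) (T : ℕ → ℕ → ℕ) : Prop :=
  (∀ i j, j < μ i → 1 ≤ T i j ∧ T i j ≤ r) ∧
  (∀ i j k, j ≤ k → k < μ i → T i j ≤ T i k) ∧
  (∀ i j, j < μ (i + 1) → T i j < T (i + 1) j)

/-- the `v`-weight: number of boxes of `μ` filled with entry `v`. -/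
noncomputable def wgt (μ : ℕ → ℕ) (T : ℕ → ℕ → ℕ) (v : ℕ) : ℕ :=
  {p : ℕ × ℕ | p.2 < μ p.1 ∧ T p.1 p.2 = v}.ncard

/-- A `(v)`-strip of width `w`: one box in each of the `w` columns, all filled with `v`,
in weakly rising (left-to-right) configuration; `f j` is the row of the box in column `j`. -/
def HasIStrip (μ : ℕ → ℕ) (w : ℕ) (T : ℕ → ℕ → ℕ) (v : ℕ) : Prop :=
  ∃ f : ℕ → ℕ, (∀ j k, j ≤ k → k < w → f k ≤ f j) ∧
    ∀ j, j < w → j < μ (f j) ∧ T (f j) j = v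

/-- `(f, m)` is a `(v,v+1)`-strip of width `w`: one box per column, entries `v` in the
first `m` columns and `v+1` thereafter, weakly rising left-to-right. -/
def IsIIStrip (μ : ℕ → ℕ) (w : ℕ) (T : ℕ → ℕ → ℕ) (v : ℕ) (f : ℕ → ℕ) (m : ℕ) : Prop :=
  m ≤ w ∧ (∀ j k, j ≤ k → k < w → f k ≤ f j) ∧ (∀ j, j < w → j < μ (f j)) ∧
  (∀ j, j < m → T (f j) j = v) ∧ (∀ j, m ≤ j → j < w → T (f j) j = v + 1)

def HasIIStrip (μ : ℕ → ℕ) (w : ℕ) (T : ℕ → ℕ → ℕ) (v : ℕ) : Prop :=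
  ∃ f m, IsIIStrip μ w T v f m

/-- 1-strip-less: no `(i)`-strip for `i ∈ {1,…,r}` and no `(i,i+1)`-strip for
`i ∈ {1,…,r-1}`. -/
def OneStripLess (μ : ℕ → ℕ) (w : ℕ) (r : ℕ) (T : ℕ → ℕ → ℕ) : Prop :=
  (∀ v, 1 ≤ v → v ≤ r → ¬ HasIStrip μ w T v) ∧
  (∀ v, 1 ≤ v → v ≤ r - 1 → ¬ HasIIStrip μ w T v)

/-- Number of SSYTs of shape `μ` with entries in `{1,…,r}`. -/
noncomputable def ssytCount (r : ℕ) (μ : ℕ → ℕ) : ℕ :=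
  {T : ℕ → ℕ → ℕ | IsSSYT μ r T ∧ ZeroOutside μ T}.ncard

/-- `μ` with its first `j` parts removed. -/
def shiftPart (μ : ℕ → ℕ) (j : ℕ) : ℕ → ℕ := fun i => μ (i + j)

/-- A standard Young tableau of shape `μ` with entries `1,…,N`. -/
def IsSYT (μ : ℕ → ℕ) (N : ℕ) (T : ℕ → ℕ → ℕ) : Prop :=
  (∀ i j, j < μ i → 1 ≤ T i j ∧ T i j ≤ N) ∧
  (∀ i j i' j', j < μ i → j' < μ i' → T i j = T i' j' → (i, j) = (i', j')) ∧
  (∀ i j, j + 1 < μ i → T i j < T i (j + 1)) ∧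
  (∀ i j, j < μ (i + 1) → T i j < T (i + 1) j)

/-- `k` is a descent of the SYT `T`: the entry `k+1` appears in a strictly lower row. -/
def IsDescent (μ : ℕ → ℕ) (T : ℕ → ℕ → ℕ) (k : ℕ) : Prop :=
  ∃ i j i' j', j < μ i ∧ j' < μ i' ∧ T i j = k ∧ T i' j' = k + 1 ∧ i < i'

open Finset Matrix
open scoped Nat

/-!
Deleting the entries `r + 1` from a tableau with entries in `{1, …, r + 1}` leaves a tableau with
entries in `{1, …, r}` whose shape `μ` interlaces `λ` (`λ_{i+1} ≤ μ_i ≤ λ_i`), and conversely every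
such `μ` and tableau of shape `μ` is refilled uniquely. So the counts satisfy a branching recursion,
and by induction on `r` the count is `∏_{i<j} (x_i - x_j) / ∏_i (r - 1 - i)!` with
`x_i = λ_i + r - 1 - i`. In the induction step the sum of the Vandermonde product over the
interlacing `y` is, by multilinearity of the determinant, a determinant of differences of power
sums `∑_{t<n} t^j`; these are polynomials in `n` of degree `j + 1` with leading coefficient
`1 / (j + 1)`, so row operations turn it back into a Vandermonde determinant, divided by `r!`.

On the other side, the hook lengths in row `i` are `1, …, x_i` with the gaps `x_i - x_m` (`m > i`)
left out, and the factors `r + j - i` of the row give `x_i! / (r - 1 - i)!`; so the hook-content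
product is the same quotient.
-/

lemma Fin.sum_Iic_eq_sum_range {M : Type*} [AddCommMonoid M] {n : ℕ} (k : Fin n) (f : ℕ → M) :
    ∑ m ∈ Iic k, f m = ∑ t ∈ range (k + 1), f t := by
  rw [Nat.range_succ_eq_Iic, ← Fin.map_valEmbedding_Iic, sum_map]
  rfl

lemma Finset.eq_range_card_of_isLowerSet {s : Finset ℕ} (hs : IsLowerSet (s : Set ℕ)) :
    s = range #s := by
  obtain h | ⟨a, h⟩ := hs.eq_univ_or_Iio
  · exact absurd (h ▸ s.finite_toSet) Set.infinite_univ
  · obtain rfl : s = range a := by rw [← coe_inj, h, coe_range]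
    rw [card_range]

lemma prod_Ico_sub_mul_factorial {b c N : ℕ} (hbc : b ≤ c) (hcN : c ≤ N) :
    (∏ j ∈ Ico b c, (N - j)) * (N - c)! = (N - b)! := by
  have h := Nat.factorial_mul_descFactorial (n := N - b) (k := c - b) (by omega)
  rw [Nat.descFactorial_eq_prod_range, show N - b - (c - b) = N - c by omega] at h
  rw [prod_Ico_eq_prod_range, mul_comm, ← h]
  congr 1
  exact prod_congr rfl fun t _ => by omega

lemma prod_add_mul_factorial (a n : ℕ) : (∏ j ∈ range n, (a + 1 + j)) * a ! = (a + n)! := by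
  rw [← Nat.ascFactorial_eq_prod_range, mul_comm, Nat.factorial_mul_ascFactorial]

section Vandermonde

variable {R : Type*} [CommRing R] {n : ℕ}

def vandermondeProd (v : Fin n → R) : R := ∏ i, ∏ j ∈ Ioi i, (v i - v j)

lemma vandermondeProd_eq_sign_mul_det (v : Fin n → R) :
    vandermondeProd v = (∏ i : Fin n, (-1) ^ #(Ioi i)) * (vandermonde v).det := by
  rw [det_vandermonde, vandermondeProd, ← prod_mul_distrib]
  refine prod_congr rfl fun i _ => ?_
  rw [← prod_neg]
  simp only [neg_sub]

lemma vandermondeProd_succ (v : Fin (n + 1) → R) :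
    vandermondeProd v = (∏ i : Fin n, (v 0 - v i.succ)) * vandermondeProd fun i => v i.succ := by
  simp only [vandermondeProd]
  rw [Fin.prod_univ_succ, Fin.Ioi_zero_eq_map, prod_map]
  simp only [Fin.Ioi_succ, prod_map]
  rfl

lemma det_of_sum_rows {m ι : Type*} [Fintype m] [DecidableEq m] (s : m → Finset ι)
    (g : m → ι → m → R) :
    (of fun i j => ∑ t ∈ s i, g i t j).det =
      ∑ d ∈ Fintype.piFinset s, (of fun i j => g i (d i) j).det := by
  simp only [← Finset.sum_apply]
  exact (detRowAlternating : (m → R) [⋀^m]→ₗ[R] R).map_sum_finset g s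

lemma det_of_pow_succ_sub_pow_succ (a : R) (z : Fin n → R) :
    (of fun i k : Fin n => a ^ (k + 1 : ℕ) - z i ^ (k + 1 : ℕ)).det =
      (∏ i, (a - z i)) * (vandermonde z).det := by
  let U : Matrix (Fin n) (Fin n) R := of fun m k => if m ≤ k then a ^ (k - m : ℕ) else 0
  have hU : U.det = 1 := by
    rw [det_of_isUpperTriangular (M := U) fun k m hmk => if_neg (not_le.mpr hmk)]
    simp [U]
  have hfactor : (of fun i k : Fin n => a ^ (k + 1 : ℕ) - z i ^ (k + 1 : ℕ)) =
      diagonal (fun i => a - z i) * vandermonde z * U := by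
    ext i k
    rw [Matrix.mul_assoc, diagonal_mul, mul_apply]
    simp only [of_apply, vandermonde_apply, U, mul_ite, mul_zero]
    rw [← sum_filter, filter_ge_eq_Iic,
      Fin.sum_Iic_eq_sum_range (f := fun m => z i ^ m * a ^ (k - m)), ← neg_sub, ← geom_sum₂_mul]
    simp only [add_tsub_cancel_right]
    ring
  rw [hfactor, det_mul, det_mul, det_diagonal, hU, mul_one]

end Vandermonde

section PowerSums

def powerSum (j n : ℕ) : ℚ := ∑ t ∈ range n, (t : ℚ) ^ j

-- Faulhaber's formula (`sum_range_pow`) read as a polynomial in `n`; only the diagonal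
-- coefficient `powerSumCoeff j j = 1 / (j + 1)` matters.
def powerSumCoeff (j k : ℕ) : ℚ := bernoulli (j - k) * (j + 1).choose (j - k) / (j + 1)

lemma powerSum_eq_sum_powerSumCoeff (j n : ℕ) :
    powerSum j n = ∑ k ∈ range (j + 1), powerSumCoeff j k * (n : ℚ) ^ (k + 1) := by
  rw [powerSum, sum_range_pow, ← sum_range_reflect]
  refine sum_congr rfl fun k hk => ?_
  have hk : k ≤ j := Nat.lt_succ_iff.mp (mem_range.mp hk)
  rw [powerSumCoeff, show j + 1 - 1 - k = j - k by omega, show j + 1 - (j - k) = k + 1 by omega]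
  ring

lemma det_of_powerSum_sub {n : ℕ} (a : ℕ) (z : Fin n → ℕ) :
    (of fun i j : Fin n => powerSum j a - powerSum j (z i)).det =
      (∏ i, ((a : ℚ) - z i)) * (vandermonde fun i => (z i : ℚ)).det / n ! := by
  let C : Matrix (Fin n) (Fin n) ℚ := of fun k j => if k ≤ j then powerSumCoeff j k else 0
  have hC : C.det = 1 / n ! := by
    rw [det_of_isUpperTriangular (M := C) fun j k hkj => if_neg (not_le.mpr hkj)]
    simp only [C, of_apply, le_refl, if_true, powerSumCoeff, Nat.sub_self, bernoulli_zero,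
      Nat.choose_zero_right, Nat.cast_one, one_mul, prod_div_distrib, prod_const_one]
    rw [Fin.prod_univ_eq_prod_range (fun k => (k : ℚ) + 1)]
    exact_mod_cast congrArg (fun m : ℕ => 1 / (m : ℚ)) (prod_range_add_one_eq_factorial n)
  have hfactor : (of fun i j : Fin n => powerSum j a - powerSum j (z i)) =
      (of fun i k : Fin n => (a : ℚ) ^ (k + 1 : ℕ) - (z i : ℚ) ^ (k + 1 : ℕ)) * C := by
    ext i j
    simp only [mul_apply, of_apply, C, mul_ite, mul_zero]
    rw [← sum_filter, filter_ge_eq_Iic, Fin.sum_Iic_eq_sum_range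
        (f := fun k => ((a : ℚ) ^ (k + 1) - (z i : ℚ) ^ (k + 1)) * powerSumCoeff j k),
      powerSum_eq_sum_powerSumCoeff, powerSum_eq_sum_powerSumCoeff, ← sum_sub_distrib]
    exact sum_congr rfl fun k _ => by ring
  rw [hfactor, det_mul, det_of_pow_succ_sub_pow_succ, hC]
  ring

theorem sum_vandermondeProd_interlacing (x : ℕ → ℕ) (hx : Antitone x) (r : ℕ) :
    ∑ y ∈ Fintype.piFinset (fun i : Fin r => Ico (x (i + 1)) (x i)),
        vandermondeProd (fun i => (y i : ℚ)) =
      vandermondeProd (fun i : Fin (r + 1) => (x i : ℚ)) / r ! := by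
  let B : Matrix (Fin r) (Fin r) ℚ :=
    of fun i j => ∑ t ∈ Ico (x (i + 1)) (x i), (t : ℚ) ^ (j : ℕ)
  let L : Matrix (Fin r) (Fin r) ℚ := of fun i k => if k ≤ i then 1 else 0
  have hL : L.det = 1 := by
    rw [det_of_isLowerTriangular L fun i k hik => if_neg (not_le.mpr hik)]
    simp [L]
  -- adding up rows `0, …, i` of `B` telescopes
  have hLB : L * B = of fun i j : Fin r => powerSum j (x 0) - powerSum j (x (i + 1)) := by
    ext i j
    simp only [mul_apply, of_apply, L, B, ite_mul, one_mul, zero_mul]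
    rw [← sum_filter, filter_ge_eq_Iic, Fin.sum_Iic_eq_sum_range
        (f := fun k => ∑ t ∈ Ico (x (k + 1)) (x k), (t : ℚ) ^ (j : ℕ)),
      ← sum_range_sub' (fun k => powerSum j (x k))]
    exact sum_congr rfl fun k _ => sum_Ico_eq_sub _ (hx k.le_succ)
  have hB : ∑ y ∈ Fintype.piFinset (fun i : Fin r => Ico (x (i + 1)) (x i)),
      (vandermonde fun i => (y i : ℚ)).det = B.det :=
    (det_of_sum_rows (fun i : Fin r => Ico (x (i + 1)) (x i))
      fun _ t (j : Fin r) => (t : ℚ) ^ (j : ℕ)).symm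
  have hBdet : B.det = (∏ i : Fin r, ((x 0 : ℚ) - x (i + 1))) *
      (vandermonde fun i : Fin r => (x (i + 1) : ℚ)).det / r ! := by
    rw [← one_mul B.det, ← hL, ← det_mul, hLB, det_of_powerSum_sub (x 0) fun i => x (i + 1)]
  rw [vandermondeProd_succ, vandermondeProd_eq_sign_mul_det fun i : Fin r => (x (i.succ : ℕ) : ℚ)]
  simp_rw [vandermondeProd_eq_sign_mul_det, ← mul_sum, hB, hBdet]
  simp only [Fin.val_zero, Fin.val_succ]
  ring

end PowerSums

section Branching

def ssytSet (r : ℕ) (mu : ℕ → ℕ) : Set (ℕ → ℕ → ℕ) := {T | IsSSYT mu r T ∧ ZeroOutside mu T}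

def lowerShape (r : ℕ) (lam : ℕ → ℕ) (T : ℕ → ℕ → ℕ) (i : ℕ) : ℕ :=
  #{j ∈ range (lam i) | T i j ≤ r}

def restrictShape (mu : ℕ → ℕ) (T : ℕ → ℕ → ℕ) : ℕ → ℕ → ℕ :=
  fun i j => if j < mu i then T i j else 0

def fillSkew (r : ℕ) (mu lam : ℕ → ℕ) (T : ℕ → ℕ → ℕ) : ℕ → ℕ → ℕ :=
  fun i j => if j < mu i then T i j else if j < lam i then r + 1 else 0

def Interlaces (mu lam : ℕ → ℕ) : Prop := ∀ i, lam (i + 1) ≤ mu i ∧ mu i ≤ lam i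

def padZero {r : ℕ} (d : Fin r → ℕ) : ℕ → ℕ := fun n => if h : n < r then d ⟨n, h⟩ else 0

variable {r N : ℕ} {lam mu : ℕ → ℕ} {T : ℕ → ℕ → ℕ}

lemma IsSSYT.lt_apply (hlam : Antitone lam) (hT : IsSSYT lam N T) {i j : ℕ} (hj : j < lam i) :
    i < T i j := by
  induction i generalizing j with
  | zero => exact (hT.1 0 j hj).1
  | succ i ih =>
    have := ih (hj.trans_le (hlam i.le_succ))
    have := hT.2.2 i j hj
    omega

lemma ssytSet_finite (hp : IsPartition r lam) : (ssytSet r lam).Finite := by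
  have hinj : Set.InjOn (fun T (p : Fin r × Fin (lam 0)) =>
      (⟨min (T p.1 p.2) r, Nat.lt_succ_of_le (min_le_right _ _)⟩ : Fin (r + 1))) (ssytSet r lam) := by
    intro T hT T' hT' heq
    funext i j
    by_cases hj : j < lam i
    · have hi : i < r := not_le.mp fun hi => by rw [hp.2 i hi] at hj; omega
      have h := congrArg Fin.val (congrFun heq (⟨i, hi⟩, ⟨j, hj.trans_le (hp.1 0 i i.zero_le)⟩))
      simpa [min_eq_left (hT.1.1 i j hj).2, min_eq_left (hT'.1.1 i j hj).2] using h
    · rw [hT.2 i j hj, hT'.2 i j hj]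
  exact Set.Finite.of_finite_image (Set.toFinite _) hinj

lemma lt_lowerShape_iff (hT : IsSSYT lam N T) {i j : ℕ} :
    j < lowerShape r lam T i ↔ j < lam i ∧ T i j ≤ r := by
  have hlower : IsLowerSet (({j ∈ range (lam i) | T i j ≤ r} : Finset ℕ) : Set ℕ) := by
    intro k j hjk hk
    simp only [coe_filter, mem_range, Set.mem_ofPred_eq] at hk ⊢
    exact ⟨hjk.trans_lt hk.1, (hT.2.1 i j k hjk hk.1).trans hk.2⟩
  rw [lowerShape, ← mem_range, ← Finset.eq_range_card_of_isLowerSet hlower, mem_filter, mem_range]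

lemma lowerShape_le (i : ℕ) : lowerShape r lam T i ≤ lam i :=
  (card_filter_le _ _).trans (card_range _).le

lemma le_lowerShape (hlam : Antitone lam) (hT : IsSSYT lam (r + 1) T) (i : ℕ) :
    lam (i + 1) ≤ lowerShape r lam T i := by
  by_contra! h
  have := hT.2.2 i _ h
  have := (hT.1 (i + 1) _ h).2
  exact (lt_irrefl _) ((lt_lowerShape_iff hT).mpr ⟨h.trans_le (hlam i.le_succ), by omega⟩)

lemma lowerShape_interlaces (hlam : Antitone lam) (hT : IsSSYT lam (r + 1) T) :
    Interlaces (lowerShape r lam T) lam :=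
  fun i => ⟨le_lowerShape hlam hT i, lowerShape_le i⟩

lemma lowerShape_eq_zero (hlam : Antitone lam) (hT : IsSSYT lam N T) {i : ℕ} (hi : r ≤ i) :
    lowerShape r lam T i = 0 := by
  by_contra! h
  obtain ⟨h0, hle⟩ := (lt_lowerShape_iff hT).mp (Nat.pos_of_ne_zero h)
  have := hT.lt_apply hlam h0
  omega

lemma restrictShape_mem (hlam : Antitone lam) (hT : IsSSYT lam (r + 1) T) :
    restrictShape (lowerShape r lam T) T ∈ ssytSet r (lowerShape r lam T) := by
  refine ⟨⟨fun i j hj => ?_, fun i j k hjk hk => ?_, fun i j hj => ?_⟩, fun i j hj => if_neg hj⟩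
  · obtain ⟨hj', hle⟩ := (lt_lowerShape_iff hT).mp hj
    rw [restrictShape, if_pos hj]
    exact ⟨(hT.1 i j hj').1, hle⟩
  · rw [restrictShape, restrictShape, if_pos hk, if_pos (hjk.trans_lt hk)]
    exact hT.2.1 i j k hjk ((lt_lowerShape_iff hT).mp hk).1
  · have hj' : j < lowerShape r lam T i :=
      hj.trans_le ((lowerShape_le (i + 1)).trans (le_lowerShape hlam hT i))
    rw [restrictShape, restrictShape, if_pos hj, if_pos hj']
    exact hT.2.2 i j ((lt_lowerShape_iff hT).mp hj).1

lemma fillSkew_mem (hint : Interlaces mu lam) (hT : IsSSYT mu r T) :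
    fillSkew r mu lam T ∈ ssytSet (r + 1) lam := by
  refine ⟨⟨fun i j hj => ?_, fun i j k hjk hk => ?_, fun i j hj => ?_⟩, fun i j hj => ?_⟩ <;>
    simp only [fillSkew]
  · split_ifs with hm
    · have := hT.1 i j hm
      omega
    · omega
  · by_cases hm : k < mu i
    · rw [if_pos hm, if_pos (hjk.trans_lt hm)]
      exact hT.2.1 i j k hjk hm
    · rw [if_neg hm, if_pos hk]
      split_ifs with hm'
      · have := (hT.1 i j hm').2
        omega
      all_goals omega
  · have hji : j < mu i := hj.trans_le (hint i).1
    rw [if_pos hji]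
    split_ifs with hm
    · exact hT.2.2 i j hm
    · have := (hT.1 i j hji).2
      omega
  · rw [if_neg fun h => hj (h.trans_le (hint i).2), if_neg hj]

lemma lowerShape_fillSkew (hint : Interlaces mu lam) (hT : T ∈ ssytSet r mu) :
    lowerShape r lam (fillSkew r mu lam T) = mu := by
  funext i
  rw [lowerShape, ← card_range (mu i)]
  congr 1
  ext j
  rw [mem_filter, mem_range, mem_range]
  simp only [fillSkew]
  constructor
  · rintro ⟨hjl, hle⟩
    by_contra hjm
    rw [if_neg hjm, if_pos hjl] at hle
    omega
  · intro hjm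
    rw [if_pos hjm]
    exact ⟨hjm.trans_le (hint i).2, (hT.1.1 i j hjm).2⟩

lemma restrictShape_fillSkew (hT : ZeroOutside mu T) :
    restrictShape mu (fillSkew r mu lam T) = T := by
  funext i j
  by_cases hj : j < mu i
  · simp [restrictShape, fillSkew, hj]
  · simp [restrictShape, hj, hT i j hj]

lemma fillSkew_restrictShape (hT : T ∈ ssytSet (r + 1) lam) :
    fillSkew r (lowerShape r lam T) lam (restrictShape (lowerShape r lam T) T) = T := by
  funext i j
  by_cases hm : j < lowerShape r lam T i
  · simp [fillSkew, restrictShape, hm]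
  · simp only [fillSkew, restrictShape, if_neg hm]
    split_ifs with hj
    · have := (hT.1.1 i j hj).2
      have := mt (lt_lowerShape_iff hT.1).mpr hm
      omega
    · exact (hT.2 i j hj).symm

lemma ncard_lowerShape_fiber (hlam : Antitone lam) (hint : Interlaces mu lam) :
    {T ∈ ssytSet (r + 1) lam | lowerShape r lam T = mu}.ncard = ssytCount r mu := by
  refine Set.BijOn.ncard_eq (f := restrictShape mu) (Set.InvOn.bijOn (f' := fillSkew r mu lam)
    ⟨fun T ⟨hT, hTmu⟩ => hTmu ▸ fillSkew_restrictShape hT,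
      fun T hT => restrictShape_fillSkew hT.2⟩ ?_ ?_)
  · rintro T ⟨hT, rfl⟩
    exact restrictShape_mem hlam hT.1
  · exact fun T hT => ⟨fillSkew_mem hint hT.1, lowerShape_fillSkew hint hT⟩

lemma padZero_injective : Function.Injective (padZero (r := r)) :=
  fun d d' h => funext fun i => by simpa [padZero] using congrFun h i

lemma padZero_interlaces (hp : IsPartition (r + 1) lam) {d : Fin r → ℕ}
    (hd : d ∈ Fintype.piFinset fun i : Fin r => Icc (lam (i + 1)) (lam i)) :
    Interlaces (padZero d) lam := by
  intro n
  simp only [padZero]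
  split_ifs with h
  · exact mem_Icc.mp (Fintype.mem_piFinset.mp hd ⟨n, h⟩)
  · exact ⟨(hp.2 (n + 1) (by omega)).le, Nat.zero_le _⟩

lemma Interlaces.isPartition (h : Interlaces mu lam) (hmu : ∀ i, r ≤ i → mu i = 0) :
    IsPartition r mu :=
  ⟨antitone_nat_of_succ_le fun i => (h (i + 1)).2.trans (h i).1, hmu⟩

theorem ssytCount_succ (hp : IsPartition (r + 1) lam) :
    ssytCount (r + 1) lam = ∑ d ∈ Fintype.piFinset (fun i : Fin r => Icc (lam (i + 1)) (lam i)),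
      ssytCount r (padZero d) := by
  classical
  have hS := ssytSet_finite hp
  have hmaps : Set.MapsTo (lowerShape r lam) hS.toFinset
      ((Fintype.piFinset fun i : Fin r => Icc (lam (i + 1)) (lam i)).image padZero) := by
    intro T hT
    rw [Set.Finite.coe_toFinset] at hT
    rw [coe_image]
    refine ⟨fun i => lowerShape r lam T i, Fintype.mem_piFinset.mpr fun i =>
      mem_Icc.mpr (lowerShape_interlaces hp.1 hT.1 i), funext fun n => ?_⟩
    simp only [padZero]
    split_ifs with h
    · rfl
    · exact (lowerShape_eq_zero hp.1 hT.1 (not_lt.mp h)).symm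
  rw [ssytCount, ← ssytSet, Set.ncard_eq_toFinset_card _ hS, card_eq_sum_card_fiberwise hmaps,
    sum_image padZero_injective.injOn]
  refine sum_congr rfl fun d hd => ?_
  rw [← ncard_lowerShape_fiber hp.1 (padZero_interlaces hp hd), ← Set.ncard_coe_finset]
  congr 1
  ext T
  simp

end Branching

section HookLengths

def hookLength (r : ℕ) (lam : ℕ → ℕ) (i j : ℕ) : ℕ :=
  (lam i - j) + #{k ∈ range r | i < k ∧ j < lam k}

def shiftedParts (r : ℕ) (lam : ℕ → ℕ) (i : ℕ) : ℕ := lam i + (r - 1 - i)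

variable {r : ℕ} {lam : ℕ → ℕ}

lemma shiftedParts_antitone (hlam : Antitone lam) : Antitone (shiftedParts r lam) :=
  fun i m him => by have := hlam him; simp only [shiftedParts]; omega

lemma hookLength_of_mem_Ico (hlam : Antitone lam) {i k j : ℕ} (hik : i ≤ k) (hkr : k < r)
    (hj : j ∈ Ico (lam (k + 1)) (lam k)) : hookLength r lam i j = lam i + (k - i) - j := by
  have hj := mem_Ico.mp hj
  have hlegs : ({m ∈ range r | i < m ∧ j < lam m} : Finset ℕ) = Ioc i k := by
    ext m
    simp only [mem_filter, mem_range, mem_Ioc]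
    constructor
    · rintro ⟨-, him, hjm⟩
      refine ⟨him, not_lt.mp fun hkm => ?_⟩
      have := hlam (show k + 1 ≤ m by omega)
      omega
    · rintro ⟨him, hmk⟩
      have := hlam hmk
      exact ⟨by omega, him, by omega⟩
  have := hlam hik
  rw [hookLength, hlegs, Nat.card_Ioc]
  omega

-- In the columns `λ_k ≤ j < λ_i` of row `i` the hook lengths are `1, …, λ_i - λ_k + (k - i)`
-- with the values `λ_i - λ_m + (m - i)`, `i < m ≤ k`, left out.
lemma prod_hookLength_Ico_mul (hp : IsPartition r lam) {i k : ℕ} (hik : i ≤ k) (hkr : k ≤ r) :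
    (∏ j ∈ Ico (lam k) (lam i), hookLength r lam i j) * ∏ m ∈ Ioc i k, (lam i - lam m + (m - i)) =
      (lam i - lam k + (k - i))! := by
  induction k, hik using Nat.le_induction with
  | base => simp
  | succ k hik ih =>
    have hk1 := hp.1 k (k + 1) k.le_succ
    have hki := hp.1 i k hik
    have hblock : (∏ j ∈ Ico (lam (k + 1)) (lam k), hookLength r lam i j) *
        (lam i - lam k + (k - i))! = (lam i - lam (k + 1) + (k - i))! := by
      rw [prod_congr rfl fun j hj => hookLength_of_mem_Ico hp.1 hik (by omega) hj,
        show lam i - lam k + (k - i) = lam i + (k - i) - lam k by omega,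
        show lam i - lam (k + 1) + (k - i) = lam i + (k - i) - lam (k + 1) by omega]
      exact prod_Ico_sub_mul_factorial hk1 (by omega)
    rw [← prod_Ico_consecutive _ hk1 hki, prod_Ioc_succ_top hik,
      show lam i - lam (k + 1) + (k + 1 - i) = (lam i - lam (k + 1) + (k - i)) + 1 by omega,
      Nat.factorial_succ, ← hblock, ← ih (by omega)]
    ring

lemma prod_hookLength_mul (hp : IsPartition r lam) {i : ℕ} (hi : i < r) :
    (∏ j ∈ range (lam i), hookLength r lam i j) *
        ∏ m ∈ Ioo i r, (shiftedParts r lam i - shiftedParts r lam m) = (shiftedParts r lam i)! := by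
  have h := prod_hookLength_Ico_mul hp hi.le le_rfl
  have hr := hp.2 r le_rfl
  rw [hr, ← range_eq_Ico, ← Ioo_insert_right hi, prod_insert right_notMem_Ioo, hr,
    show lam i - 0 + (r - i) = shiftedParts r lam i + 1 by simp only [shiftedParts]; omega,
    Nat.factorial_succ] at h
  have hgaps : ∏ m ∈ Ioo i r, (shiftedParts r lam i - shiftedParts r lam m) =
      ∏ m ∈ Ioo i r, (lam i - lam m + (m - i)) := by
    refine prod_congr rfl fun m hm => ?_
    have := mem_Ioo.mp hm
    have := hp.1 i m this.1.le
    simp only [shiftedParts]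
    omega
  refine Nat.eq_of_mul_eq_mul_left (shiftedParts r lam i).succ_pos (Eq.trans ?_ h)
  rw [hgaps, Nat.succ_eq_add_one]
  ring

lemma prod_content_div_hookLength_row (hp : IsPartition r lam) {i : ℕ} (hi : i < r) :
    ∏ j ∈ range (lam i), ((r : ℚ) + j - i) / hookLength r lam i j =
      (∏ m ∈ Ioo i r, ((shiftedParts r lam i : ℚ) - shiftedParts r lam m)) / (r - 1 - i)! := by
  have hnum : (∏ j ∈ range (lam i), ((r : ℚ) + j - i)) * (r - 1 - i)! =
      (shiftedParts r lam i)! := by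
    rw [shiftedParts, add_comm, ← prod_add_mul_factorial]
    push_cast [Nat.cast_sub (show 1 + i ≤ r by omega), Nat.sub_sub]
    congr 1
    exact prod_congr rfl fun j _ => by ring
  have hden : (∏ j ∈ range (lam i), (hookLength r lam i j : ℚ)) *
      ∏ m ∈ Ioo i r, ((shiftedParts r lam i : ℚ) - shiftedParts r lam m) =
        (shiftedParts r lam i)! := by
    rw [← prod_hookLength_mul hp hi]
    push_cast
    congr 1
    exact prod_congr rfl fun m hm =>
      (Nat.cast_sub (shiftedParts_antitone hp.1 (mem_Ioo.mp hm).1.le)).symm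
  have hH : (∏ j ∈ range (lam i), (hookLength r lam i j : ℚ)) ≠ 0 :=
    left_ne_zero_of_mul (hden ▸ Nat.cast_ne_zero.mpr (Nat.factorial_ne_zero _))
  rw [prod_div_distrib, div_eq_div_iff hH (Nat.cast_ne_zero.mpr (Nat.factorial_ne_zero _)), hnum,
    ← hden]
  ring

lemma prod_content_div_hookLength (hp : IsPartition r lam) :
    ∏ p ∈ (range r ×ˢ range (lam 0)).filter (fun p => p.2 < lam p.1),
        ((r : ℚ) + p.2 - p.1) / hookLength r lam p.1 p.2 =
      vandermondeProd (fun i : Fin r => (shiftedParts r lam i : ℚ)) /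
        ∏ i : Fin r, ((r - 1 - i)! : ℚ) := by
  rw [prod_filter, prod_product, vandermondeProd, ← prod_div_distrib,
    ← Fin.prod_univ_eq_prod_range]
  refine prod_congr rfl fun i _ => ?_
  have hrow : (range (lam 0)).filter (· < lam i) = range (lam i) := by
    ext j
    simp only [mem_filter, mem_range, and_iff_right_iff_imp]
    exact fun hj => hj.trans_le (hp.1 0 i (Nat.zero_le _))
  rw [← prod_filter, hrow, prod_content_div_hookLength_row hp i.isLt, ← Fin.map_valEmbedding_Ioi,
    prod_map]
  rfl

end HookLengths

section Count

variable {r : ℕ} {lam : ℕ → ℕ}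

lemma ssytCount_zero (hp : IsPartition 0 lam) : ssytCount 0 lam = 1 := by
  have hlam : ∀ i j, ¬ j < lam i := fun i j => by rw [hp.2 i i.zero_le]; omega
  rw [ssytCount, Set.ncard_eq_one]
  refine ⟨fun _ _ => 0, Set.eq_singleton_iff_unique_mem.mpr ⟨?_, fun T hT => ?_⟩⟩
  · exact ⟨⟨fun i j h => absurd h (hlam i j), fun i j k _ h => absurd h (hlam i k),
      fun i j h => absurd h (hlam (i + 1) j)⟩, fun _ _ _ => rfl⟩
  · exact funext fun i => funext fun j => hT.2 i j (hlam i j)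

lemma sum_vandermondeProd_padZero (hp : IsPartition (r + 1) lam) :
    ∑ d ∈ Fintype.piFinset (fun i : Fin r => Icc (lam (i + 1)) (lam i)),
        vandermondeProd (fun i : Fin r => (shiftedParts r (padZero d) i : ℚ)) =
      vandermondeProd (fun i : Fin (r + 1) => (shiftedParts (r + 1) lam i : ℚ)) / r ! := by
  rw [← sum_vandermondeProd_interlacing _ (shiftedParts_antitone hp.1) r]
  refine sum_nbij' (fun d i => d i + (r - 1 - i)) (fun y i => y i - (r - 1 - i)) ?_ ?_ ?_ ?_ ?_
  · intro d hd
    simp only [Fintype.mem_piFinset, mem_Icc, mem_Ico, shiftedParts] at hd ⊢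
    exact fun i => by have := hd i; omega
  · intro y hy
    simp only [Fintype.mem_piFinset, mem_Icc, mem_Ico, shiftedParts] at hy ⊢
    exact fun i => by have := hy i; omega
  · exact fun d _ => funext fun i => Nat.add_sub_cancel _ _
  · intro y hy
    simp only [Fintype.mem_piFinset, mem_Ico, shiftedParts] at hy
    exact funext fun i => by dsimp only; have := hy i; omega
  · intro d _
    simp [shiftedParts, padZero]

theorem ssytCount_eq_vandermondeProd (hp : IsPartition r lam) :
    (ssytCount r lam : ℚ) = vandermondeProd (fun i : Fin r => (shiftedParts r lam i : ℚ)) /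
      ∏ i : Fin r, ((r - 1 - i)! : ℚ) := by
  induction r generalizing lam with
  | zero => simp [ssytCount_zero hp, vandermondeProd]
  | succ r ih =>
    have hpad : ∀ d ∈ Fintype.piFinset (fun i : Fin r => Icc (lam (i + 1)) (lam i)),
        IsPartition r (padZero d) := fun d hd =>
      (padZero_interlaces hp hd).isPartition fun i hi => by simp [padZero, not_lt.mpr hi]
    rw [ssytCount_succ hp, Nat.cast_sum, sum_congr rfl fun d hd => ih (hpad d hd), ← sum_div,
      sum_vandermondeProd_padZero hp, Fin.prod_univ_succ, div_div]
    simp [Nat.sub_sub, add_comm]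

end Count

/-- Hook content formula: the number of SSYTs of shape `lam` with entries in `{1,…,r}`
equals `∏_u (r + c(u)) / h(u)` over the boxes `u` of `lam`, where `c(u) = j - i`
is the content and `h(u)` the hook length of the box in row `i`, column `j`. -/
theorem stmt1 (r : ℕ) (lam : ℕ → ℕ) (hp : IsPartition r lam) :
    (ssytCount r lam : ℚ) =
      ∏ p ∈ (Finset.range r ×ˢ Finset.range (lam 0)).filter (fun p => p.2 < lam p.1),
        (((r : ℚ) + (p.2 : ℚ) - (p.1 : ℚ)) /
          (((lam p.1 - p.2 : ℕ) : ℚ) +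
            (((Finset.range r).filter (fun k => p.1 < k ∧ p.2 < lam k)).card : ℚ))) := by
  rw [ssytCount_eq_vandermondeProd hp, ← prod_content_div_hookLength hp]
  simp only [hookLength, Nat.cast_add]
end

section
/- Fix integers r < n and a partition λ ⊆ (n-r)^r. For each i ∈ {1,...,r}, define an (i)-strip of an SSYT of shape λ (entries in {1,...,r}) to be a set of n-r boxes all filled with entry i, no two in the same column, such that whenever one box lies in a column strictly to the left of another, it does not lie in a strictly higher row. Let m(λ) be the number of parts of λ equal to n-r, and for 0 ≤ j ≤ m(λ) let λ^j be the partition of length r-j obtained by removing j parts of size n-r. Then the number of SSYTs of shape λ with entries in {1,...,r} containing no (i)-strip for any i equals Σ_{j=0}^{m(λ)} (-1)^j · C(r,j) · |SSYT_{r-j}(λ^j)|, where |SSYT_{r'}(μ)| is the number of SSYTs of shape μ with entries in {1,...,r'}. -/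
/-!
A semistandard tableau is determined by its column sets, and its rows weakly increase exactly
when each column set dominates the next one: the `k`-th smallest entries weakly increase from left
to right (`dominates_iff_forall_nth_le`). As columns strictly increase, `T` has an `(i)`-strip iff
`i` occurs in each of the `n - r` columns, the box of column `c` lying in the row given by the
number of entries `< i` of that column.

By inclusion–exclusion over the set `S` of values forced to have a strip, it remains to count the
tableaux in which every `i ∈ S` occurs in every column. There are none unless `|S| ≤ m`, the
length of the last column; otherwise deleting `S` from every column and relabelling
`{1,…,r} \ S` order-preservingly by `1,…,r-|S|` is a bijection onto the semistandard tableaux of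
shape `λ^{|S|}` with entries at most `r - |S|`.
-/

open Finset

namespace Finset

variable {A : Finset ℕ} {k t x : ℕ}

lemma card_filter_lt_eq_count (A : Finset ℕ) (t : ℕ) :
    #{x ∈ A | x < t} = Nat.count (· ∈ A) t := by
  rw [Nat.count_eq_card_filter_range]
  congr 1
  ext x
  simp [and_comm]

lemma nth_mem_of_lt_card (hk : k < #A) : Nat.nth (· ∈ A) k ∈ A :=
  Nat.nth_mem_of_lt_card A.finite_toSet (by rwa [finite_toSet_toFinset])

lemma nth_strictMonoOn : StrictMonoOn (Nat.nth (· ∈ A)) (Set.Iio #A) := by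
  simpa using Nat.nth_strictMonoOn (p := (· ∈ A)) A.finite_toSet

lemma card_filter_lt_nth (hk : k < #A) : #{x ∈ A | x < Nat.nth (· ∈ A) k} = k := by
  rw [card_filter_lt_eq_count]
  exact Nat.count_nth_of_lt_card_finite A.finite_toSet (by rwa [finite_toSet_toFinset])

lemma nth_card_filter_lt (hx : x ∈ A) : Nat.nth (· ∈ A) #{y ∈ A | y < x} = x := by
  rw [card_filter_lt_eq_count]
  exact Nat.nth_count hx

lemma nth_lt_iff_lt_card_filter (hk : k < #A) :
    Nat.nth (· ∈ A) k < t ↔ k < #{x ∈ A | x < t} := by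
  rw [card_filter_lt_eq_count]
  refine ⟨fun h => ?_, Nat.nth_lt_of_lt_count⟩
  calc k < Nat.count (· ∈ A) (Nat.nth (· ∈ A) k + 1) := by
        rw [Nat.count_succ, ← card_filter_lt_eq_count, card_filter_lt_nth hk,
          if_pos (nth_mem_of_lt_card hk)]
        omega
    _ ≤ Nat.count (· ∈ A) t := Nat.count_monotone _ h

lemma image_nth_range (A : Finset ℕ) : (range #A).image (Nat.nth (· ∈ A)) = A := by
  refine eq_of_subset_of_card_le (fun y hy => ?_) ?_
  · obtain ⟨k, hk, rfl⟩ := mem_image.1 hy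
    exact nth_mem_of_lt_card (mem_range.1 hk)
  · rw [card_image_of_injOn (nth_strictMonoOn.injOn.mono (by simp)), card_range]

lemma nth_image {g : ℕ → ℕ} {K : Set ℕ} (hg : StrictMonoOn g K) (hA : ↑A ⊆ K) (hk : k < #A) :
    Nat.nth (· ∈ A.image g) k = g (Nat.nth (· ∈ A) k) := by
  have hmem := nth_mem_of_lt_card hk
  have hcount : #{y ∈ A.image g | y < g (Nat.nth (· ∈ A) k)} = k := by
    rw [filter_image, card_image_of_injOn (hg.injOn.mono fun x hx => hA (mem_filter.1 hx).1)]
    convert card_filter_lt_nth hk using 2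
    exact filter_congr fun x hx => hg.lt_iff_lt (hA hx) (hA hmem)
  simpa only [hcount] using nth_card_filter_lt (mem_image_of_mem g hmem)

end Finset

def Dominates (A B : Finset ℕ) : Prop := ∀ t, #{x ∈ B | x < t} ≤ #{x ∈ A | x < t}

lemma dominates_iff_forall_nth_le {A B : Finset ℕ} :
    Dominates A B ↔ ∀ i < #B, i < #A ∧ Nat.nth (· ∈ A) i ≤ Nat.nth (· ∈ B) i := by
  refine ⟨fun h i hi => ?_, fun h t => ?_⟩
  · have hlt : i < #{x ∈ A | x < Nat.nth (· ∈ B) i + 1} :=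
      (h _).trans_lt' ((nth_lt_iff_lt_card_filter hi).1 (Nat.lt_succ_self _))
    have hiA : i < #A := hlt.trans_le (card_le_card (filter_subset _ _))
    exact ⟨hiA, Nat.lt_succ_iff.1 ((nth_lt_iff_lt_card_filter hiA).2 hlt)⟩
  · by_contra! hlt
    set i := #{x ∈ A | x < t}
    have hiB : i < #B := hlt.trans_le (card_le_card (filter_subset _ _))
    obtain ⟨hiA, hle⟩ := h i hiB
    exact lt_irrefl i ((nth_lt_iff_lt_card_filter hiA).1
      (hle.trans_lt ((nth_lt_iff_lt_card_filter hiB).2 hlt)))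

namespace Dominates

variable {A B S : Finset ℕ}

lemma of_empty (A : Finset ℕ) : Dominates A ∅ := fun t => by simp

lemma trans {C : Finset ℕ} (hAB : Dominates A B) (hBC : Dominates B C) : Dominates A C :=
  fun t => (hBC t).trans (hAB t)

lemma image {g : ℕ → ℕ} {K : Set ℕ} (hg : StrictMonoOn g K) (hA : ↑A ⊆ K) (hB : ↑B ⊆ K)
    (h : Dominates A B) : Dominates (A.image g) (B.image g) := by
  rw [dominates_iff_forall_nth_le] at h ⊢
  intro i hi
  rw [card_image_of_injOn (hg.injOn.mono hB)] at hi
  obtain ⟨hiA, hle⟩ := h i hi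
  refine ⟨by rwa [card_image_of_injOn (hg.injOn.mono hA)], ?_⟩
  rw [nth_image hg hA hiA, nth_image hg hB hi]
  exact hg.monotoneOn (hA (nth_mem_of_lt_card hiA)) (hB (nth_mem_of_lt_card hi)) hle

lemma union_left (hA : Disjoint S A) (hB : Disjoint S B) (h : Dominates A B) :
    Dominates (S ∪ A) (S ∪ B) := fun t => by
  rw [filter_union, filter_union, card_union_of_disjoint (disjoint_filter_filter hB),
    card_union_of_disjoint (disjoint_filter_filter hA)]
  exact Nat.add_le_add_left (h t) _

lemma sdiff (hA : S ⊆ A) (hB : S ⊆ B) (h : Dominates A B) : Dominates (A \ S) (B \ S) :=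
  fun t => by
  have hsd (C : Finset ℕ) (hC : S ⊆ C) :
      #{x ∈ C \ S | x < t} + #{x ∈ S | x < t} = #{x ∈ C | x < t} := by
    rw [← card_union_of_disjoint (disjoint_filter_filter sdiff_disjoint), ← filter_union,
      sdiff_union_of_subset hC]
  have := h t
  have := hsd A hA
  have := hsd B hB
  omega

end Dominates

def colLen (R : ℕ) (ν : ℕ → ℕ) (c : ℕ) : ℕ := #{b ∈ range R | c < ν b}

lemma colLen_antitone (R : ℕ) (ν : ℕ → ℕ) : Antitone (colLen R ν) := fun _ _ h =>
  card_le_card (monotone_filter_right _ fun _ _ hb => h.trans_lt hb)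

lemma colLen_eq_zero {R w c : ℕ} {ν : ℕ → ℕ} (hνw : ∀ i, ν i ≤ w) (hc : w ≤ c) :
    colLen R ν c = 0 :=
  card_eq_zero.2 (filter_eq_empty_iff.2 fun b _ => not_lt.2 ((hνw b).trans hc))

lemma colLen_sub_one_eq {R w : ℕ} {ν : ℕ → ℕ} (hνw : ∀ i, ν i ≤ w) (hw : 0 < w) :
    colLen R ν (w - 1) = #{i ∈ range R | ν i = w} :=
  congrArg card (filter_congr fun i _ => by have := hνw i; omega)

namespace IsPartition

variable {R : ℕ} {ν : ℕ → ℕ}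

lemma lt_colLen_iff (hν : IsPartition R ν) {b c : ℕ} : b < colLen R ν c ↔ c < ν b := by
  constructor
  · intro hb
    by_contra! hνb
    have : {b' ∈ range R | c < ν b'} ⊆ range b := fun b' hb' => by
      rw [mem_filter] at hb'
      by_contra! hbb'
      exact lt_irrefl c (hb'.2.trans_le ((hν.1 _ _ (not_lt.1 (mem_range.not.1 hbb'))).trans hνb))
    exact (card_le_card this).not_gt (by rwa [card_range])
  · intro hνb
    have : range (b + 1) ⊆ {b' ∈ range R | c < ν b'} := fun b' hb' => by
      have hb'b : b' ≤ b := Nat.lt_succ_iff.1 (mem_range.1 hb')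
      have hbR : b < R := by
        by_contra! h
        simp [hν.2 b h] at hνb
      exact mem_filter.2 ⟨mem_range.2 (hb'b.trans_lt hbR), hνb.trans_le (hν.1 _ _ hb'b)⟩
    simpa [colLen] using card_le_card this

lemma shiftPart (hν : IsPartition R ν) (j : ℕ) : IsPartition R (_root_.shiftPart ν j) :=
  ⟨fun _ _ h => hν.1 _ _ (by omega), fun _ h => hν.2 _ (by omega)⟩

lemma colLen_shiftPart (hν : IsPartition R ν) (j c : ℕ) :
    colLen R (_root_.shiftPart ν j) c = colLen R ν c - j := by
  refine eq_of_forall_lt_iff fun b => ?_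
  rw [(hν.shiftPart j).lt_colLen_iff, Nat.lt_sub_iff_add_lt, hν.lt_colLen_iff]
  rfl

end IsPartition

def columnsOf (R : ℕ) (ν : ℕ → ℕ) (T : ℕ → ℕ → ℕ) (c : ℕ) : Finset ℕ :=
  (range (colLen R ν c)).image (T · c)

noncomputable def ofColumns (R : ℕ) (ν : ℕ → ℕ) (C : ℕ → Finset ℕ) (b c : ℕ) : ℕ :=
  if b < colLen R ν c then Nat.nth (· ∈ C c) b else 0

def IsColumnFamily (R : ℕ) (ν : ℕ → ℕ) (q : ℕ) (C : ℕ → Finset ℕ) : Prop :=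
  ∀ c, #(C c) = colLen R ν c ∧ C c ⊆ Icc 1 q ∧ Dominates (C c) (C (c + 1))

lemma IsColumnFamily.dominates {R q : ℕ} {ν : ℕ → ℕ} {C : ℕ → Finset ℕ}
    (hC : IsColumnFamily R ν q C) {c c' : ℕ} (h : c ≤ c') : Dominates (C c) (C c') := by
  induction c', h using Nat.le_induction with
  | base => exact fun t => le_rfl
  | succ k _ ih => exact ih.trans (hC k).2.2

lemma IsColumnFamily.eq_empty {R q w c : ℕ} {ν : ℕ → ℕ} {C : ℕ → Finset ℕ}
    (hC : IsColumnFamily R ν q C) (hνw : ∀ i, ν i ≤ w) (hc : w ≤ c) : C c = ∅ := by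
  rw [← card_eq_zero, (hC c).1, colLen_eq_zero hνw hc]

namespace IsSSYT

variable {R q : ℕ} {ν : ℕ → ℕ} {T : ℕ → ℕ → ℕ}

lemma strictMonoOn_column (hT : IsSSYT ν q T) (hν : IsPartition R ν) (c : ℕ) :
    StrictMonoOn (T · c) (Set.Iio (colLen R ν c)) :=
  strictMonoOn_of_lt_add_one Set.ordConnected_Iio fun b _ _ hb =>
    hT.2.2 b c (hν.lt_colLen_iff.1 hb)

lemma card_columnsOf (hT : IsSSYT ν q T) (hν : IsPartition R ν) (c : ℕ) :
    #(columnsOf R ν T c) = colLen R ν c := by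
  rw [columnsOf, card_image_of_injOn ((hT.strictMonoOn_column hν c).injOn.mono (by simp)),
    card_range]

lemma nth_columnsOf (hT : IsSSYT ν q T) (hν : IsPartition R ν) {b c : ℕ}
    (hb : b < colLen R ν c) : Nat.nth (· ∈ columnsOf R ν T c) b = T b c := by
  have hb' : b < #(range (colLen R ν c)) := by rwa [card_range]
  rw [columnsOf, nth_image (hT.strictMonoOn_column hν c) (by simp) hb',
    Nat.nth_of_forall fun b' hb' => mem_range.2 (hb'.trans_lt hb)]

lemma isColumnFamily_columnsOf (hT : IsSSYT ν q T) (hν : IsPartition R ν) :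
    IsColumnFamily R ν q (columnsOf R ν T) := by
  intro c
  refine ⟨hT.card_columnsOf hν c, ?_, ?_⟩
  · intro x hx
    obtain ⟨b, hb, rfl⟩ := mem_image.1 hx
    exact mem_Icc.2 (hT.1 b c (hν.lt_colLen_iff.1 (mem_range.1 hb)))
  · rw [dominates_iff_forall_nth_le, hT.card_columnsOf hν, hT.card_columnsOf hν]
    intro i hi
    have hi' : i < colLen R ν c := hi.trans_le (colLen_antitone R ν (Nat.le_succ c))
    rw [hT.nth_columnsOf hν hi, hT.nth_columnsOf hν hi']
    exact ⟨hi', hT.2.1 i c (c + 1) (Nat.le_succ c) (hν.lt_colLen_iff.1 hi)⟩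

lemma ofColumns_columnsOf (hT : IsSSYT ν q T) (hT₀ : ZeroOutside ν T) (hν : IsPartition R ν) :
    ofColumns R ν (columnsOf R ν T) = T := by
  funext b c
  unfold ofColumns
  split_ifs with hb
  · exact hT.nth_columnsOf hν hb
  · exact (hT₀ b c (hν.lt_colLen_iff.not.1 hb)).symm

lemma hasIStrip_iff (hT : IsSSYT ν q T) (hν : IsPartition R ν) {w v : ℕ} :
    HasIStrip ν w T v ↔ ∀ c < w, v ∈ columnsOf R ν T c := by
  constructor
  · rintro ⟨f, -, hf⟩ c hc
    rw [← (hf c hc).2]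
    exact mem_image_of_mem _ (mem_range.2 (hν.lt_colLen_iff.2 (hf c hc).1))
  · intro hv
    refine ⟨fun c => #{x ∈ columnsOf R ν T c | x < v}, fun c c' hcc' _ =>
      (hT.isColumnFamily_columnsOf hν).dominates hcc' v, fun c hc => ?_⟩
    have hmem := hv c hc
    have hlt : #{x ∈ columnsOf R ν T c | x < v} < colLen R ν c := by
      rw [← hT.card_columnsOf hν c]
      exact card_lt_card (filter_ssubset.2 ⟨v, hmem, lt_irrefl v⟩)
    refine ⟨hν.lt_colLen_iff.1 hlt, ?_⟩
    rw [← hT.nth_columnsOf hν hlt, nth_card_filter_lt hmem]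

end IsSSYT

namespace IsColumnFamily

variable {R q : ℕ} {ν : ℕ → ℕ} {C : ℕ → Finset ℕ}

lemma columnsOf_ofColumns (hC : IsColumnFamily R ν q C) : columnsOf R ν (ofColumns R ν C) = C := by
  funext c
  conv_rhs => rw [← image_nth_range (C c)]
  rw [columnsOf, (hC c).1]
  exact image_congr fun b hb => if_pos (by simpa using hb)

lemma isSSYT_ofColumns (hC : IsColumnFamily R ν q C) (hν : IsPartition R ν) :
    IsSSYT ν q (ofColumns R ν C) ∧ ZeroOutside ν (ofColumns R ν C) := by
  have hcard {b c : ℕ} (h : b < colLen R ν c) : b < #(C c) := (hC c).1 ▸ h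
  refine ⟨⟨fun i j hj => ?_, fun i j k hjk hk => ?_, fun i j hj => ?_⟩, fun i j hj => ?_⟩
  · have hi := hν.lt_colLen_iff.2 hj
    rw [ofColumns, if_pos hi]
    exact mem_Icc.1 ((hC j).2.1 (nth_mem_of_lt_card (hcard hi)))
  · have hik := hν.lt_colLen_iff.2 hk
    have hij := hik.trans_le (colLen_antitone R ν hjk)
    rw [ofColumns, ofColumns, if_pos hij, if_pos hik]
    exact (dominates_iff_forall_nth_le.1 (hC.dominates hjk) i (hcard hik)).2
  · have hi := hν.lt_colLen_iff.2 hj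
    have hi' := hν.lt_colLen_iff.2 ((hν.1 i (i + 1) (Nat.le_succ i)).trans_lt' hj)
    rw [ofColumns, ofColumns, if_pos hi', if_pos hi]
    exact nth_strictMonoOn (hcard hi') (hcard hi) (lt_add_one i)
  · rw [ofColumns, if_neg (hν.lt_colLen_iff.not.2 hj)]

end IsColumnFamily

namespace IsPartition

variable {R : ℕ} {ν : ℕ → ℕ}

lemma bijOn_columnsOf (hν : IsPartition R ν) (q : ℕ) :
    Set.BijOn (columnsOf R ν) {T | IsSSYT ν q T ∧ ZeroOutside ν T}
      {C | IsColumnFamily R ν q C} :=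
  Set.InvOn.bijOn (f' := ofColumns R ν)
    ⟨fun _ hT => hT.1.ofColumns_columnsOf hT.2 hν, fun _ hC => hC.columnsOf_ofColumns⟩
    (fun _ hT => hT.1.isColumnFamily_columnsOf hν) (fun _ hC => hC.isSSYT_ofColumns hν)

lemma finite_ssyt (hν : IsPartition R ν) (q : ℕ) :
    {T | IsSSYT ν q T ∧ ZeroOutside ν T}.Finite := by
  let restrict (T : ℕ → ℕ → ℕ) (p : Fin R × Fin (ν 0)) : ℕ := T p.1 p.2
  have hcell {b c : ℕ} (h : c < ν b) : b < R ∧ c < ν 0 := by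
    refine ⟨by_contra fun hb => ?_, h.trans_le (hν.1 0 b (Nat.zero_le b))⟩
    simp [hν.2 b (not_lt.1 hb)] at h
  refine Set.Finite.of_finite_image (f := restrict)
    ((Set.Finite.pi (ι := Fin R × Fin (ν 0)) fun _ => Set.finite_Iic q).subset ?_)
    (fun T hT T' hT' h => ?_)
  · rintro _ ⟨T, ⟨hT, hT₀⟩, rfl⟩ p -
    by_cases hp : (p.2 : ℕ) < ν p.1
    · exact (hT.1 _ _ hp).2
    · simp [restrict, hT₀ _ _ hp]
  · funext b c
    by_cases hbc : c < ν b
    · exact congrFun h (⟨b, (hcell hbc).1⟩, ⟨c, (hcell hbc).2⟩)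
    · rw [hT.2 b c hbc, hT'.2 b c hbc]

end IsPartition

section Relabel

variable {K : Finset ℕ} {x y : ℕ}

def rank (K : Finset ℕ) (x : ℕ) : ℕ := #{y ∈ K | y < x} + 1

noncomputable def unrank (K : Finset ℕ) (y : ℕ) : ℕ := Nat.nth (· ∈ K) (y - 1)

lemma strictMonoOn_rank : StrictMonoOn (rank K) K := fun x hx _ _ h => by
  simpa only [rank, card_filter_lt_eq_count, add_lt_add_iff_right] using
    Nat.count_strict_mono (p := (· ∈ K)) (mem_coe.1 hx) h

lemma strictMonoOn_unrank : StrictMonoOn (unrank K) (Icc 1 #K) := fun y hy y' hy' h => by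
  simp only [coe_Icc, Set.mem_Icc] at hy hy'
  exact nth_strictMonoOn (by simp; omega) (by simp; omega) (by omega)

lemma rank_mem_Icc (hx : x ∈ K) : rank K x ∈ Icc 1 #K := by
  have : #{y ∈ K | y < x} < #K := card_lt_card (filter_ssubset.2 ⟨x, hx, lt_irrefl x⟩)
  simp only [rank, mem_Icc]
  omega

lemma unrank_mem (hy : y ∈ Icc 1 #K) : unrank K y ∈ K :=
  nth_mem_of_lt_card (by simp only [mem_Icc] at hy; omega)

lemma unrank_rank (hx : x ∈ K) : unrank K (rank K x) = x := by
  simp [unrank, rank, nth_card_filter_lt hx]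

lemma rank_unrank (hy : y ∈ Icc 1 #K) : rank K (unrank K y) = y := by
  simp only [mem_Icc] at hy
  rw [rank, unrank, card_filter_lt_nth (by omega)]
  omega

lemma image_unrank_subset {D : Finset ℕ} (hD : D ⊆ Icc 1 #K) : D.image (unrank K) ⊆ K :=
  image_subset_iff.2 fun _ hy => unrank_mem (hD hy)

lemma image_unrank_image_rank {A : Finset ℕ} (hA : A ⊆ K) :
    (A.image (rank K)).image (unrank K) = A := by
  rw [image_image, image_congr (g := id) (f := unrank K ∘ rank K) fun x hx => unrank_rank (hA hx),
    image_id]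

lemma image_rank_image_unrank {D : Finset ℕ} (hD : D ⊆ Icc 1 #K) :
    (D.image (unrank K)).image (rank K) = D := by
  rw [image_image, image_congr (g := id) (f := rank K ∘ unrank K) fun y hy => rank_unrank (hD hy),
    image_id]

end Relabel

def eraseValues (q : ℕ) (S : Finset ℕ) (C : ℕ → Finset ℕ) (c : ℕ) : Finset ℕ :=
  (C c \ S).image (rank (Icc 1 q \ S))

noncomputable def insertValues (q w : ℕ) (S : Finset ℕ) (D : ℕ → Finset ℕ) (c : ℕ) :
    Finset ℕ :=
  if c < w then S ∪ (D c).image (unrank (Icc 1 q \ S)) else ∅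

section EraseValues

variable {R q w : ℕ} {ν : ℕ → ℕ} {S : Finset ℕ}

lemma card_Icc_sdiff (hS : S ⊆ Icc 1 q) : #(Icc 1 q \ S) = q - #S := by
  rw [card_sdiff_of_subset hS, Nat.card_Icc, Nat.add_sub_cancel]

lemma mapsTo_eraseValues (hν : IsPartition R ν) (hνw : ∀ i, ν i ≤ w) (hS : S ⊆ Icc 1 q) :
    Set.MapsTo (eraseValues q S) {C | IsColumnFamily R ν q C ∧ ∀ c < w, S ⊆ C c}
      {D | IsColumnFamily R (shiftPart ν #S) (q - #S) D} := by
  rintro C ⟨hC, hSC⟩ c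
  have hsub (c : ℕ) : C c \ S ⊆ Icc 1 q \ S := sdiff_subset_sdiff (hC c).2.1 subset_rfl
  refine ⟨?_, ?_, ?_⟩
  · rw [eraseValues, card_image_of_injOn (strictMonoOn_rank.injOn.mono (coe_subset.2 (hsub c))),
      hν.colLen_shiftPart, ← (hC c).1]
    by_cases hc : c < w
    · exact card_sdiff_of_subset (hSC c hc)
    · simp [hC.eq_empty hνw (not_lt.1 hc)]
  · intro y hy
    obtain ⟨x, hx, rfl⟩ := mem_image.1 hy
    simpa [card_Icc_sdiff hS] using rank_mem_Icc (hsub c hx)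
  · by_cases hc : c + 1 < w
    · exact ((hC c).2.2.sdiff (hSC c (by omega)) (hSC (c + 1) hc)).image strictMonoOn_rank
        (coe_subset.2 (hsub c)) (coe_subset.2 (hsub (c + 1)))
    · simp [eraseValues, hC.eq_empty hνw (not_lt.1 hc), Dominates.of_empty]

lemma mapsTo_insertValues (hν : IsPartition R ν) (hνw : ∀ i, ν i ≤ w) (hS : S ⊆ Icc 1 q)
    (hSw : ∀ c < w, #S ≤ colLen R ν c) :
    Set.MapsTo (insertValues q w S) {D | IsColumnFamily R (shiftPart ν #S) (q - #S) D}
      {C | IsColumnFamily R ν q C ∧ ∀ c < w, S ⊆ C c} := by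
  intro D hD
  have hsub (c : ℕ) : D c ⊆ Icc 1 #(Icc 1 q \ S) := card_Icc_sdiff hS ▸ (hD c).2.1
  have hdisj (c : ℕ) : Disjoint S ((D c).image (unrank (Icc 1 q \ S))) :=
    disjoint_of_subset_right (image_unrank_subset (hsub c)) disjoint_sdiff
  refine ⟨fun c => ⟨?_, ?_, ?_⟩, fun c hc => ?_⟩
  · by_cases hc : c < w
    · rw [insertValues, if_pos hc, card_union_of_disjoint (hdisj c),
        card_image_of_injOn (strictMonoOn_unrank.injOn.mono (coe_subset.2 (hsub c))), (hD c).1,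
        hν.colLen_shiftPart]
      have := hSw c hc
      omega
    · rw [insertValues, if_neg hc, colLen_eq_zero hνw (not_lt.1 hc), card_empty]
  · unfold insertValues
    split_ifs
    · exact union_subset hS ((image_unrank_subset (hsub c)).trans sdiff_subset)
    · exact empty_subset _
  · by_cases hc : c + 1 < w
    · rw [insertValues, insertValues, if_pos hc, if_pos (by omega)]
      exact ((hD c).2.2.image strictMonoOn_unrank (coe_subset.2 (hsub c))
        (coe_subset.2 (hsub (c + 1)))).union_left (hdisj c) (hdisj (c + 1))
    · simp only [insertValues, if_neg hc]
      exact Dominates.of_empty _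
  · rw [insertValues, if_pos hc]
    exact subset_union_left

lemma bijOn_eraseValues (hν : IsPartition R ν) (hνw : ∀ i, ν i ≤ w) (hS : S ⊆ Icc 1 q)
    (hSw : ∀ c < w, #S ≤ colLen R ν c) :
    Set.BijOn (eraseValues q S) {C | IsColumnFamily R ν q C ∧ ∀ c < w, S ⊆ C c}
      {D | IsColumnFamily R (shiftPart ν #S) (q - #S) D} := by
  refine Set.InvOn.bijOn (f' := insertValues q w S) ⟨?_, ?_⟩ (mapsTo_eraseValues hν hνw hS)
    (mapsTo_insertValues hν hνw hS hSw)
  · rintro C ⟨hC, hSC⟩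
    funext c
    rw [insertValues]
    split_ifs with hc
    · rw [eraseValues, image_unrank_image_rank (sdiff_subset_sdiff (hC c).2.1 subset_rfl),
        union_sdiff_of_subset (hSC c hc)]
    · exact (hC.eq_empty hνw (not_lt.1 hc)).symm
  · intro D hD
    funext c
    have hsub : D c ⊆ Icc 1 #(Icc 1 q \ S) := card_Icc_sdiff hS ▸ (hD c).2.1
    rw [eraseValues, insertValues]
    split_ifs with hc
    · rw [union_sdiff_cancel_left (disjoint_of_subset_right (image_unrank_subset hsub)
        disjoint_sdiff), image_rank_image_unrank hsub]
    · simp [hD.eq_empty (w := w) (fun i => hνw _) (not_lt.1 hc)]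

end EraseValues

lemma ite_forall_not_eq_sum_powerset {ι : Type*} (s : Finset ι) (p : ι → Prop)
    [DecidablePred p] :
    (if ∀ i ∈ s, ¬ p i then 1 else 0 : ℤ)
      = ∑ t ∈ s.powerset, (-1) ^ #t * if ∀ i ∈ t, p i then 1 else 0 := by
  classical
  calc (if ∀ i ∈ s, ¬ p i then 1 else 0 : ℤ)
      = ∏ i ∈ s, (1 - if p i then 1 else 0) := by
        rw [← prod_boole]
        exact prod_congr rfl fun i _ => by split_ifs <;> simp
    _ = _ := by
        rw [prod_sub]
        exact sum_congr rfl fun t _ => by rw [prod_const_one, mul_one, prod_boole]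

lemma Set.Finite.ncard_sep_forall_not {α ι : Type*} {F : Set α} (hF : F.Finite) (s : Finset ι)
    (P : ι → α → Prop) :
    ({x ∈ F | ∀ i ∈ s, ¬ P i x}.ncard : ℤ)
      = ∑ t ∈ s.powerset, (-1) ^ #t * ({x ∈ F | ∀ i ∈ t, P i x}.ncard : ℤ) := by
  classical
  lift F to Finset α using hF
  have hcard (p : α → Prop) : {x ∈ (F : Set α) | p x}.ncard = #(F.filter p) := by
    rw [← Set.ncard_coe_finset, coe_filter]
    rfl
  simp only [hcard, natCast_card_filter, mul_sum]
  rw [sum_comm]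
  exact sum_congr rfl fun x _ => by convert ite_forall_not_eq_sum_powerset s (P · x)

section Count

variable {R q w : ℕ} {ν : ℕ → ℕ} {S : Finset ℕ}

lemma ncard_ssyt_hasIStrip (hν : IsPartition R ν) (hνw : ∀ i, ν i ≤ w) (hS : S ⊆ Icc 1 q)
    (hSw : ∀ c < w, #S ≤ colLen R ν c) :
    {T | IsSSYT ν q T ∧ ZeroOutside ν T ∧ ∀ v ∈ S, HasIStrip ν w T v}.ncard
      = ssytCount (q - #S) (shiftPart ν #S) := by
  have hcols := (hν.bijOn_columnsOf q).inter_mapsTo (s₂ := {T | ∀ c < w, S ⊆ columnsOf R ν T c})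
    (t₂ := {C : ℕ → Finset ℕ | ∀ c < w, S ⊆ C c}) (fun _ h => h) (fun _ h => h.2)
  calc _ = ({T | IsSSYT ν q T ∧ ZeroOutside ν T} ∩ {T | ∀ c < w, S ⊆ columnsOf R ν T c}).ncard := by
        congr 1
        ext T
        constructor
        · rintro ⟨hT, hT₀, hstrip⟩
          exact ⟨⟨hT, hT₀⟩, fun c hc v hv => (hT.hasIStrip_iff hν).1 (hstrip v hv) c hc⟩
        · rintro ⟨⟨hT, hT₀⟩, hSC⟩
          exact ⟨hT, hT₀, fun v hv => (hT.hasIStrip_iff hν).2 fun c hc => hSC c hc hv⟩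
    _ = {C | IsColumnFamily R ν q C ∧ ∀ c < w, S ⊆ C c}.ncard := hcols.ncard_eq
    _ = ssytCount (q - #S) (shiftPart ν #S) :=
      (bijOn_eraseValues hν hνw hS hSw).ncard_eq.trans
        ((hν.shiftPart #S).bijOn_columnsOf (q - #S)).ncard_eq.symm

lemma ncard_ssyt_hasIStrip_eq_ite (hν : IsPartition R ν) (hνw : ∀ i, ν i ≤ w) (hw : 0 < w)
    (hS : S ⊆ Icc 1 q) :
    {T | IsSSYT ν q T ∧ ZeroOutside ν T ∧ ∀ v ∈ S, HasIStrip ν w T v}.ncard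
      = if #S ≤ colLen R ν (w - 1) then ssytCount (q - #S) (shiftPart ν #S) else 0 := by
  split_ifs with hSw
  · exact ncard_ssyt_hasIStrip hν hνw hS fun c hc =>
      hSw.trans (colLen_antitone R ν (Nat.le_sub_one_of_lt hc))
  · convert Set.ncard_empty (ℕ → ℕ → ℕ)
    refine Set.eq_empty_iff_forall_notMem.2 ?_
    rintro T ⟨hT, -, hstrip⟩
    have : S ⊆ columnsOf R ν T (w - 1) :=
      fun v hv => (hT.hasIStrip_iff hν).1 (hstrip v hv) _ (Nat.sub_one_lt_of_lt hw)
    exact hSw (hT.card_columnsOf hν _ ▸ card_le_card this)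

end Count

/-- The number of SSYTs of shape `lam ⊆ (n-r)^r` with entries in `{1,…,r}` containing no
`(i)`-strip for any `i` equals `∑_{j=0}^{m} (-1)^j C(r,j) |SSYT_{r-j}(lam^j)|`, where `m`
is the number of parts of `lam` equal to `n-r` and `lam^j` removes `j` such parts. -/
theorem stmt2 (n r : ℕ) (hrn : r < n) (lam : ℕ → ℕ) (hp : IsPartition r lam)
    (hsub : ∀ i, lam i ≤ n - r)
    (m : ℕ) (hm : m = ((Finset.range r).filter (fun i => lam i = n - r)).card) :
    ({T : ℕ → ℕ → ℕ | IsSSYT lam r T ∧ ZeroOutside lam T ∧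
        ∀ v, 1 ≤ v → v ≤ r → ¬ HasIStrip lam (n - r) T v}.ncard : ℤ)
      = ∑ j ∈ Finset.range (m + 1),
          (-1 : ℤ) ^ j * (r.choose j : ℤ) * (ssytCount (r - j) (shiftPart lam j) : ℤ) := by
  have hw : 0 < n - r := Nat.sub_pos_of_lt hrn
  have hmr : m ≤ r := hm ▸ (card_filter_le _ _).trans_eq (card_range r)
  have hlast : colLen r lam (n - r - 1) = m := by rw [colLen_sub_one_eq hsub hw, hm]
  let f (j : ℕ) : ℤ :=
    (-1) ^ j * ((if j ≤ m then ssytCount (r - j) (shiftPart lam j) else 0 : ℕ) : ℤ)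
  calc _ = ∑ S ∈ (Icc 1 r).powerset, (-1) ^ #S * ({T | IsSSYT lam r T ∧ ZeroOutside lam T ∧
          ∀ v ∈ S, HasIStrip lam (n - r) T v}.ncard : ℤ) := by
        simpa [and_assoc] using (hp.finite_ssyt r).ncard_sep_forall_not (Icc 1 r)
          fun v T => HasIStrip lam (n - r) T v
    _ = ∑ S ∈ (Icc 1 r).powerset, f #S := sum_congr rfl fun S hS => by
        rw [ncard_ssyt_hasIStrip_eq_ite hp hsub hw (mem_powerset.1 hS), hlast]
    _ = ∑ j ∈ range (r + 1), r.choose j • f j := by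
        rw [sum_powerset_apply_card, Nat.card_Icc, Nat.add_sub_cancel]
    _ = _ := by
        rw [← sum_subset (range_subset_range.2 (by omega : m + 1 ≤ r + 1)) fun j _ hj => by
          simp [f, show ¬ j ≤ m by simpa using hj]]
        refine sum_congr rfl fun j hj => ?_
        simp only [f, if_pos (Nat.lt_succ_iff.1 (mem_range.1 hj)), nsmul_eq_mul]
        ring
end

section
/- Fix integers r < n, a partition λ ⊆ (n-r)^r, a subset S ⊆ {1,...,r} of size j, and suppose λ has at least j parts equal to n-r. Then the SSYTs of shape λ with entries in {1,...,r} that contain an (s)-strip for every s ∈ S are in bijection with SSYTs of shape λ^j (obtained from λ by deleting j parts of size n-r) filled with entries from {1,...,r} \ S; in particular their number equals |SSYT_{r-j}(λ^j)|. -/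
namespace StripAux

def Mono (μ : ℕ → ℕ) : Prop := ∀ i j, i ≤ j → μ j ≤ μ i

def Good (μ : ℕ → ℕ) (r : ℕ) (T : ℕ → ℕ → ℕ) : Prop := IsSSYT μ r T ∧ ZeroOutside μ T

def Avoids (μ : ℕ → ℕ) (A : Finset ℕ) (T : ℕ → ℕ → ℕ) : Prop :=
  ∀ i k, k < μ i → T i k ∉ A

variable {μ : ℕ → ℕ} {r : ℕ} {T : ℕ → ℕ → ℕ}

lemma colStrict (h : IsSSYT μ r T) (hm : Mono μ) {i i' c : ℕ} (hii : i < i')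
    (hc : c < μ i') : T i c < T i' c := by
  obtain ⟨k, rfl⟩ : ∃ k, i' = i + 1 + k := ⟨i' - (i + 1), by omega⟩
  clear hii
  induction k with
  | zero => exact h.2.2 i c hc
  | succ k ih =>
    have hc' : c < μ (i + 1 + k) := lt_of_lt_of_le hc (hm _ _ (by omega))
    have h2 : T (i + 1 + k) c < T (i + 1 + k + 1) c := h.2.2 (i + 1 + k) c hc
    have h1 := ih hc'
    have he : T (i + 1 + (k + 1)) c = T (i + 1 + k + 1) c := rfl
    omega

lemma colMono (h : IsSSYT μ r T) (hm : Mono μ) {i i' c : ℕ} (hii : i ≤ i')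
    (hc : c < μ i') : T i c ≤ T i' c := by
  rcases eq_or_lt_of_le hii with rfl | hlt
  · exact le_refl _
  · exact le_of_lt (colStrict h hm hlt hc)

lemma rowsAntitone (h : IsSSYT μ r T) (hm : Mono μ) {i i' c c' : ℕ} (hcc : c ≤ c')
    (hc' : c' < μ i') (hv : T i c = T i' c') : i' ≤ i := by
  by_contra hcon
  push_neg at hcon
  have h1 : T i c < T i' c := colStrict h hm hcon (lt_of_le_of_lt hcc hc')
  have h2 : T i' c ≤ T i' c' := h.2.1 i' c c' hcc hc'
  omega

lemma colInj (h : IsSSYT μ r T) (hm : Mono μ) {i i' c : ℕ} (hc : c < μ i)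
    (hc' : c < μ i') (he : T i c = T i' c) : i = i' := by
  rcases lt_trichotomy i i' with hlt | heq | hgt
  · exact absurd he (ne_of_lt (colStrict h hm hlt hc'))
  · exact heq
  · exact absurd he.symm (ne_of_lt (colStrict h hm hgt hc))

/-- row of the (unique) box with entry `s` in column `c`. -/
noncomputable def dl (μ : ℕ → ℕ) (T : ℕ → ℕ → ℕ) (s c : ℕ) : ℕ :=
  sInf {i | c < μ i ∧ T i c = s}

lemma dl_mem {s c : ℕ} (hne : ∃ i, c < μ i ∧ T i c = s) :
    c < μ (dl μ T s c) ∧ T (dl μ T s c) c = s := Nat.sInf_mem hne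

lemma dl_eq (h : IsSSYT μ r T) (hm : Mono μ) {s c i : ℕ} (hc : c < μ i)
    (he : T i c = s) : dl μ T s c = i := by
  have hmem := dl_mem (μ := μ) (T := T) ⟨i, hc, he⟩
  exact colInj h hm hmem.1 hc (by rw [hmem.2, he])

lemma hasIStrip_iff (h : IsSSYT μ r T) (hm : Mono μ) {w v : ℕ} :
    HasIStrip μ w T v ↔ ∀ c, c < w → ∃ i, c < μ i ∧ T i c = v := by
  constructor
  · rintro ⟨f, _, hf2⟩ c hc
    exact ⟨f c, hf2 c hc⟩
  · intro hall
    refine ⟨fun c => dl μ T v c, ?_, fun c hc => dl_mem (hall c hc)⟩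
    intro c c' hcc hc'w
    have m := dl_mem (hall c (lt_of_le_of_lt hcc hc'w))
    have m' := dl_mem (hall c' hc'w)
    exact rowsAntitone h hm hcc m'.1 (m.2.trans m'.2.symm)

end StripAux

namespace StripAux

/-- delete the `s`-strip from `T` and close up the columns. -/
noncomputable def delT (μ : ℕ → ℕ) (T : ℕ → ℕ → ℕ) (s : ℕ) : ℕ → ℕ → ℕ :=
  fun i c => if c < μ (i + 1) then (if i < dl μ T s c then T i c else T (i + 1) c) else 0

section Del

variable {μ : ℕ → ℕ} {r w s : ℕ} {T : ℕ → ℕ → ℕ}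
variable (hm : Mono μ) (hsub : ∀ i, μ i ≤ w) (hT : IsSSYT μ r T)
variable (hstr : ∀ c, c < w → ∃ i, c < μ i ∧ T i c = s)

include hm hsub hT hstr

lemma dl_mono {c c' : ℕ} (hcc : c ≤ c') (hc' : c' < w) :
    dl μ T s c' ≤ dl μ T s c := by
  have m := dl_mem (hstr c (lt_of_le_of_lt hcc hc'))
  have m' := dl_mem (hstr c' hc')
  exact rowsAntitone hT hm hcc m'.1 (m.2.trans m'.2.symm)

lemma del_isSSYT : IsSSYT (shiftPart μ 1) r (delT μ T s) := by
  have hw : ∀ {i c : ℕ}, c < μ (i + 1) → c < w := fun h => lt_of_lt_of_le h (hsub _)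
  refine ⟨?_, ?_, ?_⟩
  · intro i c hc
    have hc1 : c < μ (i + 1) := hc
    rw [delT, if_pos hc1]
    by_cases hi : i < dl μ T s c
    · rw [if_pos hi]; exact hT.1 i c (lt_of_lt_of_le hc1 (hm i (i+1) (by omega)))
    · rw [if_neg hi]; exact hT.1 (i+1) c hc1
  · intro i c c' hcc hc'
    have hc'1 : c' < μ (i + 1) := hc'
    have hc1 : c < μ (i + 1) := lt_of_le_of_lt hcc hc'
    have hd := dl_mem (hstr c (hw hc1))
    have hd' := dl_mem (hstr c' (hw hc'1))
    have hdd : dl μ T s c' ≤ dl μ T s c := dl_mono hm hsub hT hstr hcc (hw hc'1)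
    rw [delT, delT, if_pos hc1, if_pos hc'1]
    by_cases h1 : i < dl μ T s c'
    · rw [if_pos h1, if_pos (lt_of_lt_of_le h1 hdd)]
      exact hT.2.1 i c c' hcc (lt_of_lt_of_le hc'1 (hm i (i+1) (by omega)))
    · rw [if_neg h1]
      by_cases h2 : i < dl μ T s c
      · rw [if_pos h2]
        have e1 : T i c < T (dl μ T s c) c := colStrict hT hm h2 hd.1
        have e2 : T (dl μ T s c') c' ≤ T (i + 1) c' :=
          colMono hT hm (by omega) hc'1
        rw [hd.2] at e1; rw [hd'.2] at e2
        omega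
      · rw [if_neg h2]
        exact hT.2.1 (i+1) c c' hcc hc'1
  · intro i c hc
    have hc2 : c < μ (i + 1 + 1) := hc
    have hc1 : c < μ (i + 1) := lt_of_lt_of_le hc2 (hm _ _ (by omega))
    rw [delT, delT, if_pos hc1, if_pos hc2]
    by_cases h2 : i + 1 < dl μ T s c
    · rw [if_pos h2, if_pos (by omega)]
      exact hT.2.2 i c hc1
    · rw [if_neg h2]
      by_cases h1 : i < dl μ T s c
      · rw [if_pos h1]
        exact colStrict hT hm (by omega) hc2
      · rw [if_neg h1]
        exact hT.2.2 (i+1) c hc2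

lemma del_ne_s {i c : ℕ} (hc : c < shiftPart μ 1 i) : delT μ T s i c ≠ s := by
  have hc1 : c < μ (i + 1) := hc
  have hd := dl_mem (hstr c (lt_of_lt_of_le hc1 (hsub _)))
  rw [delT, if_pos hc1]
  by_cases h1 : i < dl μ T s c
  · rw [if_pos h1]
    intro he
    have := colInj hT hm (lt_of_lt_of_le hc1 (hm i (i+1) (by omega))) hd.1
      (by rw [he, hd.2])
    omega
  · rw [if_neg h1]
    intro he
    have := colInj hT hm hc1 hd.1 (by rw [he, hd.2])
    omega

lemma del_occ {v c : ℕ} (hv : v ≠ s) (hc : c < w) :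
    (∃ i, c < shiftPart μ 1 i ∧ delT μ T s i c = v) ↔ (∃ i, c < μ i ∧ T i c = v) := by
  constructor
  · rintro ⟨i, hci, he⟩
    have hc1 : c < μ (i + 1) := hci
    rw [delT, if_pos hc1] at he
    by_cases h1 : i < dl μ T s c
    · rw [if_pos h1] at he
      exact ⟨i, lt_of_lt_of_le hc1 (hm i (i+1) (by omega)), he⟩
    · rw [if_neg h1] at he
      exact ⟨i + 1, hc1, he⟩
  · rintro ⟨i, hci, he⟩
    have hd := dl_mem (hstr c hc)
    have hne : i ≠ dl μ T s c := by
      intro h; rw [h, hd.2] at he; exact hv he.symm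
    by_cases h1 : i < dl μ T s c
    · refine ⟨i, ?_, ?_⟩
      · show c < μ (i + 1)
        exact lt_of_lt_of_le hd.1 (hm _ _ (by omega))
      · have hc1 : c < μ (i + 1) := lt_of_lt_of_le hd.1 (hm _ _ (by omega))
        rw [delT, if_pos hc1, if_pos h1]; exact he
    · have h2 : dl μ T s c < i := by omega
      refine ⟨i - 1, ?_, ?_⟩
      · show c < μ (i - 1 + 1)
        have : i - 1 + 1 = i := by omega
        rw [this]; exact hci
      · have hc1 : c < μ (i - 1 + 1) := by
          have : i - 1 + 1 = i := by omega
          rw [this]; exact hci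
        rw [delT, if_pos hc1, if_neg (by omega)]
        have : i - 1 + 1 = i := by omega
        rw [this]; exact he

end Del

end StripAux


namespace StripAux

set_option linter.unusedSectionVars false

/-- insertion row for value `s` in column `c` (into the bigger shape `μ`),
given a tableau `T'` of shape `shiftPart μ 1`. -/
noncomputable def er (μ : ℕ → ℕ) (T' : ℕ → ℕ → ℕ) (s c : ℕ) : ℕ :=
  sInf {i | c < μ (i + 1) → s ≤ T' i c}

/-- insert an `s`-strip into `T'` (shape `shiftPart μ 1`), producing shape `μ`. -/
noncomputable def insT (μ : ℕ → ℕ) (T' : ℕ → ℕ → ℕ) (s : ℕ) : ℕ → ℕ → ℕ :=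
  fun i c => if c < μ i then
    (if i < er μ T' s c then T' i c else if i = er μ T' s c then s else T' (i - 1) c)
  else 0

section Ins

variable {μ : ℕ → ℕ} {r w s : ℕ} {T' : ℕ → ℕ → ℕ}
variable (hm : Mono μ) (hz : ∀ i, r ≤ i → μ i = 0) (hsub : ∀ i, μ i ≤ w) (hμ0 : μ 0 = w)
variable (hT' : IsSSYT (shiftPart μ 1) r T')
variable (havs : ∀ i c, c < shiftPart μ 1 i → T' i c ≠ s)

include hz in
lemma er_nonempty (c : ℕ) : {i | c < μ (i + 1) → s ≤ T' i c}.Nonempty := by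
  refine ⟨r, fun hc => absurd hc ?_⟩
  rw [hz (r + 1) (by omega)]
  omega

lemma er_lt {c i : ℕ} (hi : i < er μ T' s c) : c < μ (i + 1) ∧ T' i c < s := by
  have := Nat.notMem_of_lt_sInf hi
  simp only [Set.mem_setOf_eq, not_forall, not_le] at this
  obtain ⟨h1, h2⟩ := this
  exact ⟨h1, by omega⟩

include hz in
lemma er_mem {c : ℕ} (hc : c < μ (er μ T' s c + 1)) : s ≤ T' (er μ T' s c) c :=
  (Nat.sInf_mem (er_nonempty hz c)) hc

include hz hμ0 in
lemma er_cell {c : ℕ} (hc : c < w) : c < μ (er μ T' s c) := by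
  cases h : er μ T' s c with
  | zero => rw [hμ0]; exact hc
  | succ k =>
    have hk : k < er μ T' s c := by omega
    exact (er_lt (T' := T') (s := s) hk).1

include hz hT' in
lemma er_mono {c c' : ℕ} (hcc : c ≤ c') : er μ T' s c' ≤ er μ T' s c := by
  apply Nat.sInf_le
  intro hc'
  have hc : c < μ (er μ T' s c + 1) := lt_of_le_of_lt hcc hc'
  exact le_trans (er_mem hz hc) (hT'.2.1 (er μ T' s c) c c' hcc hc')

lemma shift_mono (hm : Mono μ) : Mono (shiftPart μ 1) :=
  fun a b hab => hm _ _ (by omega)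

include hm hz hsub hμ0 hT' havs in
lemma ins_isSSYT (hs1 : 1 ≤ s) (hsr : s ≤ r) : IsSSYT μ r (insT μ T' s) := by
  refine ⟨?_, ?_, ?_⟩
  · intro i c hc
    rw [insT, if_pos hc]
    by_cases h1 : i < er μ T' s c
    · rw [if_pos h1]; exact hT'.1 i c (er_lt h1).1
    · rw [if_neg h1]
      by_cases h2 : i = er μ T' s c
      · rw [if_pos h2]; exact ⟨hs1, hsr⟩
      · rw [if_neg h2]
        refine hT'.1 (i - 1) c ?_
        show c < μ (i - 1 + 1)
        have e : i - 1 + 1 = i := by omega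
        rw [e]; exact hc
  · intro i c c' hcc hc'
    have hc : c < μ i := lt_of_le_of_lt hcc hc'
    have hee : er μ T' s c' ≤ er μ T' s c := er_mono hz hT' hcc
    rw [insT, insT, if_pos hc, if_pos hc']
    by_cases h1 : i < er μ T' s c'
    · rw [if_pos h1, if_pos (lt_of_lt_of_le h1 hee)]
      exact hT'.2.1 i c c' hcc (er_lt h1).1
    · push_neg at h1
      rw [if_neg (show ¬ i < er μ T' s c' by omega)]
      have hval' : s ≤ (if i = er μ T' s c' then s else T' (i - 1) c') := by
        by_cases h6 : i = er μ T' s c'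
        · rw [if_pos h6]
        · rw [if_neg h6]
          have h3 : er μ T' s c' ≤ i - 1 := by omega
          have hcell : c' < μ (i - 1 + 1) := by
            have e : i - 1 + 1 = i := by omega
            rw [e]; exact hc'
          have hcell0 : c' < μ (er μ T' s c' + 1) :=
            lt_of_lt_of_le hcell (hm _ _ (by omega))
          calc s ≤ T' (er μ T' s c') c' := er_mem hz hcell0
            _ ≤ T' (i - 1) c' := colMono hT' (shift_mono hm) h3 hcell
      by_cases h4 : i < er μ T' s c
      · rw [if_pos h4]
        exact le_trans (le_of_lt (er_lt h4).2) hval'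
      · push_neg at h4
        by_cases h5 : i = er μ T' s c
        · rw [if_neg (show ¬ i < er μ T' s c by omega), if_pos h5]
          exact hval'
        · rw [if_neg (show ¬ i < er μ T' s c by omega), if_neg h5]
          by_cases h6 : i = er μ T' s c'
          · exact absurd h6 (by omega)
          · rw [if_neg h6]
            have hcell : c' < μ (i - 1 + 1) := by
              have e : i - 1 + 1 = i := by omega
              rw [e]; exact hc'
            exact hT'.2.1 (i - 1) c c' hcc hcell
  · intro i c hc1
    have hc : c < μ i := lt_of_lt_of_le hc1 (hm _ _ (by omega))
    rw [insT, insT, if_pos hc, if_pos hc1]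
    by_cases h1 : i + 1 < er μ T' s c
    · rw [if_pos h1, if_pos (by omega)]
      exact hT'.2.2 i c (er_lt h1).1
    · by_cases h2 : i + 1 = er μ T' s c
      · rw [if_neg h1, if_pos h2, if_pos (by omega)]
        exact (er_lt (show i < er μ T' s c by omega)).2
      · by_cases h3 : i = er μ T' s c
        · rw [if_neg (by omega), if_pos h3, if_neg h1, if_neg h2]
          have h4 : s ≤ T' (er μ T' s c) c := er_mem hz (by rw [← h3]; exact hc1)
          have h5 : T' i c ≠ s := havs i c hc1
          rw [← h3] at h4
          have e : i + 1 - 1 = i := by omega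
          rw [e]
          omega
        · have h7 : er μ T' s c < i := by omega
          rw [if_neg (by omega), if_neg h3, if_neg h1, if_neg h2]
          have e : i + 1 - 1 = i := by omega
          rw [e]
          have h8 := hT'.2.2 (i - 1) c (show c < shiftPart μ 1 (i - 1 + 1) by
            show c < μ (i - 1 + 1 + 1)
            have e2 : i - 1 + 1 + 1 = i + 1 := by omega
            rw [e2]; exact hc1)
          have e3 : i - 1 + 1 = i := by omega
          rw [e3] at h8
          exact h8

include hz hμ0 in
lemma ins_occ_s {c : ℕ} (hc : c < w) :
    c < μ (er μ T' s c) ∧ insT μ T' s (er μ T' s c) c = s := by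
  have h1 := er_cell (T' := T') (s := s) hz hμ0 hc
  refine ⟨h1, ?_⟩
  rw [insT, if_pos h1, if_neg (by omega), if_pos rfl]

include hm in
lemma ins_occ {v c : ℕ} (hv : v ≠ s) :
    (∃ i, c < μ i ∧ insT μ T' s i c = v) ↔ (∃ i, c < shiftPart μ 1 i ∧ T' i c = v) := by
  constructor
  · rintro ⟨i, hci, he⟩
    rw [insT, if_pos hci] at he
    by_cases h1 : i < er μ T' s c
    · rw [if_pos h1] at he
      exact ⟨i, (er_lt h1).1, he⟩
    · rw [if_neg h1] at he
      by_cases h2 : i = er μ T' s c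
      · rw [if_pos h2] at he
        exact absurd he.symm hv
      · rw [if_neg h2] at he
        refine ⟨i - 1, ?_, he⟩
        show c < μ (i - 1 + 1)
        have e : i - 1 + 1 = i := by omega
        rw [e]; exact hci
  · rintro ⟨i, hci, he⟩
    have hci1 : c < μ (i + 1) := hci
    by_cases h1 : i < er μ T' s c
    · refine ⟨i, lt_of_lt_of_le hci1 (hm _ _ (by omega)), ?_⟩
      rw [insT, if_pos (lt_of_lt_of_le hci1 (hm _ _ (by omega))), if_pos h1]
      exact he
    · refine ⟨i + 1, hci1, ?_⟩
      rw [insT, if_pos hci1, if_neg (by omega), if_neg (by omega)]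
      simpa using he

end Ins

end StripAux

namespace StripAux

set_option linter.unusedSectionVars false

section RT

variable {μ : ℕ → ℕ} {r w s : ℕ}
variable (hm : Mono μ) (hz : ∀ i, r ≤ i → μ i = 0) (hsub : ∀ i, μ i ≤ w) (hμ0 : μ 0 = w)
variable (hs1 : 1 ≤ s) (hsr : s ≤ r)

include hm hz hsub hμ0 hs1 hsr in
lemma del_ins {T' : ℕ → ℕ → ℕ} (hT' : IsSSYT (shiftPart μ 1) r T')
    (hZ' : ZeroOutside (shiftPart μ 1) T')
    (havs : ∀ i c, c < shiftPart μ 1 i → T' i c ≠ s) :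
    delT μ (insT μ T' s) s = T' := by
  funext i c
  by_cases hc : c < μ (i + 1)
  · have hcw : c < w := lt_of_lt_of_le hc (hsub _)
    have hU : IsSSYT μ r (insT μ T' s) := ins_isSSYT hm hz hsub hμ0 hT' havs hs1 hsr
    have hocc := ins_occ_s (T' := T') (s := s) hz hμ0 hcw
    have hdl : dl μ (insT μ T' s) s c = er μ T' s c := dl_eq hU hm hocc.1 hocc.2
    rw [delT, if_pos hc, hdl]
    by_cases h1 : i < er μ T' s c
    · rw [if_pos h1, insT, if_pos (lt_of_lt_of_le hc (hm _ _ (by omega))), if_pos h1]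
    · rw [if_neg h1, insT, if_pos hc, if_neg (show ¬ i + 1 < er μ T' s c by omega),
        if_neg (show ¬ i + 1 = er μ T' s c by omega)]
      simp
  · rw [delT, if_neg hc, hZ' i c hc]

include hm in
lemma er_del {T : ℕ → ℕ → ℕ} (hT : IsSSYT μ r T)
    (hstr : ∀ c, c < w → ∃ i, c < μ i ∧ T i c = s) {c : ℕ} (hc : c < w) :
    er μ (delT μ T s) s c = dl μ T s c := by
  have hd := dl_mem (hstr c hc)
  have hmem : dl μ T s c ∈ {i | c < μ (i + 1) → s ≤ delT μ T s i c} := by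
    intro h1
    rw [delT, if_pos h1, if_neg (lt_irrefl _)]
    have := colStrict hT hm (show dl μ T s c < dl μ T s c + 1 by omega) h1
    rw [hd.2] at this
    exact le_of_lt this
  have hub : ∀ i, i < dl μ T s c → i ∉ {i | c < μ (i + 1) → s ≤ delT μ T s i c} := by
    intro i hi hset
    have hc1 : c < μ (i + 1) := lt_of_lt_of_le hd.1 (hm _ _ (by omega))
    have h2 := hset hc1
    rw [delT, if_pos hc1, if_pos hi] at h2
    have h3 := colStrict hT hm hi hd.1
    rw [hd.2] at h3
    omega
  refine le_antisymm (Nat.sInf_le hmem) ?_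
  by_contra hcon
  push_neg at hcon
  exact hub _ hcon (Nat.sInf_mem ⟨_, hmem⟩)

include hm hsub in
lemma ins_del {T : ℕ → ℕ → ℕ} (hT : IsSSYT μ r T) (hZ : ZeroOutside μ T)
    (hstr : ∀ c, c < w → ∃ i, c < μ i ∧ T i c = s) :
    insT μ (delT μ T s) s = T := by
  funext i c
  by_cases hc : c < μ i
  · have hcw : c < w := lt_of_lt_of_le hc (hsub _)
    have hd := dl_mem (hstr c hcw)
    rw [insT, if_pos hc, er_del hm hT hstr hcw]
    by_cases h1 : i < dl μ T s c
    · rw [if_pos h1, delT, if_pos (lt_of_lt_of_le hd.1 (hm _ _ (by omega))), if_pos h1]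
    · by_cases h2 : i = dl μ T s c
      · rw [if_neg h1, if_pos h2, h2, hd.2]
      · rw [if_neg h1, if_neg h2, delT,
          if_pos (show c < μ (i - 1 + 1) by rw [show i - 1 + 1 = i by omega]; exact hc),
          if_neg (show ¬ i - 1 < dl μ T s c by omega)]
        rw [show i - 1 + 1 = i by omega]
  · rw [insT, if_neg hc, hZ i c hc]

end RT

end StripAux

namespace StripAux

set_option linter.unusedSectionVars false

noncomputable def stepEquiv {w r : ℕ} (μ : ℕ → ℕ) (hm : Mono μ) (hz : ∀ i, r ≤ i → μ i = 0)
    (hsub : ∀ i, μ i ≤ w) (hμ0 : μ 0 = w) (s : ℕ) (hs1 : 1 ≤ s) (hsr : s ≤ r)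
    (S' A : Finset ℕ) (hsS' : s ∉ S') (hsA : s ∉ A) :
    {T : ℕ → ℕ → ℕ // Good μ r T ∧ (∀ v ∈ insert s S', HasIStrip μ w T v) ∧
        Avoids μ A T} ≃
    {T : ℕ → ℕ → ℕ // Good (shiftPart μ 1) r T ∧
        (∀ v ∈ S', HasIStrip (shiftPart μ 1) w T v) ∧
        Avoids (shiftPart μ 1) (insert s A) T} := by
  have hm' : Mono (shiftPart μ 1) := shift_mono hm
  refine ⟨fun ⟨T, ⟨hT, hZ⟩, hstrips, havoid⟩ => ⟨delT μ T s, ?_⟩,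
          fun ⟨T', ⟨hT', hZ'⟩, hstrips', havoid'⟩ => ⟨insT μ T' s, ?_⟩, ?_, ?_⟩
  · -- forward
    have hstr : ∀ c, c < w → ∃ i, c < μ i ∧ T i c = s :=
      (hasIStrip_iff hT hm).1 (hstrips s (Finset.mem_insert_self s S'))
    have hD : IsSSYT (shiftPart μ 1) r (delT μ T s) := del_isSSYT hm hsub hT hstr
    refine ⟨⟨hD, fun i c h => by rw [delT]; exact if_neg h⟩, ?_, ?_⟩
    · intro v hv
      rw [hasIStrip_iff hD hm']
      intro c hc
      have hvs : v ≠ s := fun h => hsS' (h ▸ hv)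
      rw [del_occ hm hsub hT hstr hvs hc]
      exact (hasIStrip_iff hT hm).1 (hstrips v (Finset.mem_insert_of_mem hv)) c hc
    · intro i c hcell hmem
      rcases Finset.mem_insert.1 hmem with h | h
      · exact del_ne_s hm hsub hT hstr hcell h
      · have hcw : c < w := lt_of_lt_of_le hcell (hsub _)
        have hne : delT μ T s i c ≠ s := del_ne_s hm hsub hT hstr hcell
        obtain ⟨i', hc', he⟩ := (del_occ hm hsub hT hstr hne hcw).1 ⟨i, hcell, rfl⟩
        exact havoid i' c hc' (he ▸ h)
  · -- backward
    have havs : ∀ i c, c < shiftPart μ 1 i → T' i c ≠ s := fun i c h he =>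
      havoid' i c h (he ▸ Finset.mem_insert_self s A)
    have hU : IsSSYT μ r (insT μ T' s) := ins_isSSYT hm hz hsub hμ0 hT' havs hs1 hsr
    refine ⟨⟨hU, fun i c h => by rw [insT]; exact if_neg h⟩, ?_, ?_⟩
    · intro v hv
      rw [hasIStrip_iff hU hm]
      rcases Finset.mem_insert.1 hv with rfl | hv'
      · intro c hc
        have h := ins_occ_s (T' := T') (s := v) hz hμ0 hc
        exact ⟨er μ T' v c, h.1, h.2⟩
      · intro c hc
        have hvs : v ≠ s := fun h => hsS' (h ▸ hv')
        rw [ins_occ hm hvs]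
        exact (hasIStrip_iff hT' hm').1 (hstrips' v hv') c hc
    · intro i c hcell hmem
      have hne : insT μ T' s i c ≠ s := fun h => hsA (h ▸ hmem)
      obtain ⟨i', hc', he⟩ := (ins_occ hm hne).1 ⟨i, hcell, rfl⟩
      exact havoid' i' c hc' (he ▸ Finset.mem_insert_of_mem hmem)
  · -- left inverse
    rintro ⟨T, ⟨hT, hZ⟩, hstrips, havoid⟩
    have hstr : ∀ c, c < w → ∃ i, c < μ i ∧ T i c = s :=
      (hasIStrip_iff hT hm).1 (hstrips s (Finset.mem_insert_self s S'))
    exact Subtype.ext (ins_del hm hsub hT hZ hstr)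
  · -- right inverse
    rintro ⟨T', ⟨hT', hZ'⟩, hstrips', havoid'⟩
    have havs : ∀ i c, c < shiftPart μ 1 i → T' i c ≠ s := fun i c h he =>
      havoid' i c h (he ▸ Finset.mem_insert_self s A)
    exact Subtype.ext (del_ins hm hz hsub hμ0 hs1 hsr hT' hZ' havs)

end StripAux

namespace StripAux

set_option linter.unusedSectionVars false

lemma mainEquiv {w r : ℕ} (S : Finset ℕ) :
    ∀ (μ : ℕ → ℕ) (A : Finset ℕ), S ⊆ Finset.Icc 1 r → Mono μ →
      (∀ i, r ≤ i → μ i = 0) → (∀ i, μ i ≤ w) → (∀ i, i < S.card → μ i = w) →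
      Disjoint S A →
      Nonempty
        ({T : ℕ → ℕ → ℕ // Good μ r T ∧ (∀ v ∈ S, HasIStrip μ w T v) ∧ Avoids μ A T} ≃
         {T : ℕ → ℕ → ℕ // Good (shiftPart μ S.card) r T ∧
            Avoids (shiftPart μ S.card) (S ∪ A) T}) := by
  induction S using Finset.induction with
  | empty =>
    intro μ A _ hm hz hsub hfull hdisj
    refine ⟨Equiv.subtypeEquivRight fun T => ?_⟩
    constructor
    · rintro ⟨g, -, a⟩
      exact ⟨g, fun i k hk hmem => a i k hk (by simpa using hmem)⟩
    · rintro ⟨g, a⟩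
      exact ⟨g, by simp, fun i k hk hmem => a i k hk (by simp [hmem])⟩
  | @insert s S₀ hs ih =>
    intro μ A hSIcc hm hz hsub hfull hdisj
    have hcard : (insert s S₀).card = S₀.card + 1 := Finset.card_insert_of_notMem hs
    have hs1r := Finset.mem_Icc.1 (hSIcc (Finset.mem_insert_self s S₀))
    have hsA : s ∉ A := Finset.disjoint_left.1 hdisj (Finset.mem_insert_self s S₀)
    have e1 := stepEquiv μ hm hz hsub (hfull 0 (by rw [hcard]; omega)) s hs1r.1 hs1r.2
      S₀ A hs hsA
    obtain ⟨e2⟩ := ih (shiftPart μ 1) (insert s A)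
      (fun x hx => hSIcc (Finset.mem_insert_of_mem hx))
      (shift_mono hm)
      (fun i hi => hz (i + 1) (by omega))
      (fun i => hsub (i + 1))
      (fun i hi => hfull (i + 1) (by rw [hcard]; omega))
      (by
        rw [Finset.disjoint_insert_right]
        exact ⟨hs, Finset.disjoint_of_subset_left (Finset.subset_insert s S₀) hdisj⟩)
    refine ⟨e1.trans (e2.trans (Equiv.subtypeEquivRight fun T => ?_))⟩
    have hU : S₀ ∪ insert s A = insert s S₀ ∪ A := by
      ext x
      simp only [Finset.mem_union, Finset.mem_insert]
      tauto
    rw [hcard, hU]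
    exact Iff.rfl

end StripAux

namespace StripAux

set_option linter.unusedSectionVars false

noncomputable def relE (r j : ℕ) (S : Finset ℕ)
    (h : (Finset.Icc 1 r \ S).card = r - j) :
    Fin (r - j) ≃o {x // x ∈ Finset.Icc 1 r \ S} :=
  (Finset.Icc 1 r \ S).orderIsoOfFin h

noncomputable def phif (r j : ℕ) (S : Finset ℕ)
    (h : (Finset.Icc 1 r \ S).card = r - j) : ℕ → ℕ :=
  fun v => if hv : v ∈ Finset.Icc 1 r \ S then ((relE r j S h).symm ⟨v, hv⟩ : ℕ) + 1 else 0

noncomputable def psif (r j : ℕ) (S : Finset ℕ)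
    (h : (Finset.Icc 1 r \ S).card = r - j) : ℕ → ℕ :=
  fun u => if hu : u - 1 < r - j then ((relE r j S h ⟨u - 1, hu⟩ : {x // x ∈ _}) : ℕ) else 0

section Rel

variable {r j : ℕ} {S : Finset ℕ} {h : (Finset.Icc 1 r \ S).card = r - j}

lemma phif_bd {v : ℕ} (hv : v ∈ Finset.Icc 1 r \ S) :
    1 ≤ phif r j S h v ∧ phif r j S h v ≤ r - j := by
  simp only [phif]
  rw [dif_pos hv]
  have := ((relE r j S h).symm ⟨v, hv⟩).isLt
  omega

lemma phif_le {v v' : ℕ} (hv : v ∈ Finset.Icc 1 r \ S) (hv' : v' ∈ Finset.Icc 1 r \ S)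
    (hvv : v ≤ v') : phif r j S h v ≤ phif r j S h v' := by
  simp only [phif]
  rw [dif_pos hv, dif_pos hv']
  have := (relE r j S h).symm.monotone
    (show (⟨v, hv⟩ : {x // x ∈ Finset.Icc 1 r \ S}) ≤ ⟨v', hv'⟩ from Subtype.mk_le_mk.2 hvv)
  rw [Fin.le_def] at this
  omega

lemma phif_lt {v v' : ℕ} (hv : v ∈ Finset.Icc 1 r \ S) (hv' : v' ∈ Finset.Icc 1 r \ S)
    (hvv : v < v') : phif r j S h v < phif r j S h v' := by
  simp only [phif]
  rw [dif_pos hv, dif_pos hv']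
  have := (relE r j S h).symm.strictMono
    (show (⟨v, hv⟩ : {x // x ∈ Finset.Icc 1 r \ S}) < ⟨v', hv'⟩ from Subtype.mk_lt_mk.2 hvv)
  rw [Fin.lt_def] at this
  omega

lemma psif_mem {u : ℕ} (hu : u - 1 < r - j) : psif r j S h u ∈ Finset.Icc 1 r \ S := by
  simp only [psif]
  rw [dif_pos hu]
  exact (relE r j S h ⟨u - 1, hu⟩).2

lemma psif_le {u u' : ℕ} (hu : u - 1 < r - j) (hu' : u' - 1 < r - j) (huu : u ≤ u') :
    psif r j S h u ≤ psif r j S h u' := by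
  simp only [psif]
  rw [dif_pos hu, dif_pos hu']
  have := (relE r j S h).monotone (show (⟨u - 1, hu⟩ : Fin (r - j)) ≤ ⟨u' - 1, hu'⟩ by
    rw [Fin.mk_le_mk]; omega)
  exact Subtype.coe_le_coe.2 this

lemma psif_lt {u u' : ℕ} (h1 : 1 ≤ u) (hu : u - 1 < r - j) (hu' : u' - 1 < r - j)
    (huu : u < u') : psif r j S h u < psif r j S h u' := by
  simp only [psif]
  rw [dif_pos hu, dif_pos hu']
  have := (relE r j S h).strictMono (show (⟨u - 1, hu⟩ : Fin (r - j)) < ⟨u' - 1, hu'⟩ by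
    rw [Fin.mk_lt_mk]; omega)
  exact Subtype.coe_lt_coe.2 this

lemma psif_phif {v : ℕ} (hv : v ∈ Finset.Icc 1 r \ S) :
    psif r j S h (phif r j S h v) = v := by
  simp only [phif]
  rw [dif_pos hv]
  have hlt := ((relE r j S h).symm ⟨v, hv⟩).isLt
  simp only [psif]
  rw [dif_pos (show ((relE r j S h).symm ⟨v, hv⟩ : ℕ) + 1 - 1 < r - j by omega)]
  have he : (⟨((relE r j S h).symm ⟨v, hv⟩ : ℕ) + 1 - 1, by omega⟩ : Fin (r - j)) =
      (relE r j S h).symm ⟨v, hv⟩ := by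
    apply Fin.ext; simp
  rw [he, OrderIso.apply_symm_apply]

lemma phif_psif {u : ℕ} (h1 : 1 ≤ u) (hu : u - 1 < r - j) :
    phif r j S h (psif r j S h u) = u := by
  have hm := psif_mem (h := h) hu
  simp only [phif]
  rw [dif_pos hm]
  have he : (⟨psif r j S h u, hm⟩ : {x // x ∈ Finset.Icc 1 r \ S}) =
      relE r j S h ⟨u - 1, hu⟩ := by
    apply Subtype.ext
    simp only [psif]
    rw [dif_pos hu]
  rw [he, OrderIso.symm_apply_apply]
  simp
  omega

end Rel

lemma relabelEquiv {r j : ℕ} (ν : ℕ → ℕ) (hm : Mono ν) (S : Finset ℕ)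
    (hS : S ⊆ Finset.Icc 1 r) (hj : S.card = j) :
    Nonempty ({T : ℕ → ℕ → ℕ // Good ν r T ∧ Avoids ν S T} ≃
      {T : ℕ → ℕ → ℕ // Good ν (r - j) T}) := by
  have h : (Finset.Icc 1 r \ S).card = r - j := by
    rw [Finset.card_sdiff_of_subset hS, Nat.card_Icc, hj]
    omega
  have hcell : ∀ {T : ℕ → ℕ → ℕ}, Good ν r T → Avoids ν S T →
      ∀ {i c}, c < ν i → T i c ∈ Finset.Icc 1 r \ S := by
    intro T hG hA i c hc
    rw [Finset.mem_sdiff, Finset.mem_Icc]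
    exact ⟨⟨(hG.1.1 i c hc).1, (hG.1.1 i c hc).2⟩, hA i c hc⟩
  refine ⟨⟨fun ⟨T, hG, hA⟩ => ⟨fun i c => if c < ν i then phif r j S h (T i c) else 0, ?_⟩,
          fun ⟨T, hG⟩ => ⟨fun i c => if c < ν i then psif r j S h (T i c) else 0, ?_⟩,
          ?_, ?_⟩⟩
  · refine ⟨⟨?_, ?_, ?_⟩, ?_⟩
    · intro i c hc
      dsimp only
      rw [if_pos hc]
      exact phif_bd (hcell hG hA hc)
    · intro i c c' hcc hc'
      have hc : c < ν i := lt_of_le_of_lt hcc hc'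
      dsimp only
      rw [if_pos hc, if_pos hc']
      exact phif_le (hcell hG hA hc) (hcell hG hA hc') (hG.1.2.1 i c c' hcc hc')
    · intro i c hc1
      have hc : c < ν i := lt_of_lt_of_le hc1 (hm i (i + 1) (by omega))
      dsimp only
      rw [if_pos hc, if_pos hc1]
      exact phif_lt (hcell hG hA hc) (hcell hG hA hc1) (hG.1.2.2 i c hc1)
    · intro i c hc
      dsimp only
      rw [if_neg hc]
  · refine ⟨⟨⟨?_, ?_, ?_⟩, ?_⟩, ?_⟩
    · intro i c hc
      dsimp only
      rw [if_pos hc]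
      have hb := hG.1.1 i c hc
      have hmm := psif_mem (h := h) (u := T i c) (by omega)
      rw [Finset.mem_sdiff, Finset.mem_Icc] at hmm
      exact ⟨hmm.1.1, hmm.1.2⟩
    · intro i c c' hcc hc'
      have hc : c < ν i := lt_of_le_of_lt hcc hc'
      dsimp only
      rw [if_pos hc, if_pos hc']
      have hb := hG.1.1 i c hc
      have hb' := hG.1.1 i c' hc'
      exact psif_le (by omega) (by omega) (hG.1.2.1 i c c' hcc hc')
    · intro i c hc1
      have hc : c < ν i := lt_of_lt_of_le hc1 (hm i (i + 1) (by omega))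
      dsimp only
      rw [if_pos hc, if_pos hc1]
      have hb := hG.1.1 i c hc
      have hb' := hG.1.1 (i + 1) c hc1
      exact psif_lt (by omega) (by omega) (by omega) (hG.1.2.2 i c hc1)
    · intro i c hc
      dsimp only
      rw [if_neg hc]
    · intro i c hc
      dsimp only
      rw [if_pos hc]
      have hb := hG.1.1 i c hc
      have hmm := psif_mem (h := h) (u := T i c) (by omega)
      rw [Finset.mem_sdiff] at hmm
      exact hmm.2
  · rintro ⟨T, hG, hA⟩
    apply Subtype.ext
    funext i c
    dsimp only
    by_cases hc : c < ν i
    · rw [if_pos hc, if_pos hc]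
      exact psif_phif (hcell hG hA hc)
    · rw [if_neg hc]
      exact (hG.2 i c hc).symm
  · rintro ⟨T, hG⟩
    apply Subtype.ext
    funext i c
    dsimp only
    by_cases hc : c < ν i
    · rw [if_pos hc, if_pos hc]
      have hb := hG.1.1 i c hc
      exact phif_psif hb.1 (by omega)
    · rw [if_neg hc]
      exact (hG.2 i c hc).symm

end StripAux

open StripAux

/-- SSYTs of shape `lam ⊆ (n-r)^r` (entries in `{1,…,r}`) containing an `(s)`-strip for
every `s ∈ S` are in bijection with SSYTs of shape `lam^j` (`j = |S|` parts of size `n-r`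
removed) with entries in `{1,…,r} \ S`; in particular their number is
`|SSYT_{r-j}(lam^j)|`. -/
theorem stmt3 (n r : ℕ) (hrn : r < n) (lam : ℕ → ℕ) (hp : IsPartition r lam)
    (hsub : ∀ i, lam i ≤ n - r)
    (S : Finset ℕ) (hS : S ⊆ Finset.Icc 1 r) (j : ℕ) (hj : j = S.card)
    (hparts : j ≤ ((Finset.range r).filter (fun i => lam i = n - r)).card) :
    Nonempty
      ({T : ℕ → ℕ → ℕ // IsSSYT lam r T ∧ ZeroOutside lam T ∧
          ∀ s ∈ S, HasIStrip lam (n - r) T s} ≃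
       {T : ℕ → ℕ → ℕ // IsSSYT (shiftPart lam j) r T ∧ ZeroOutside (shiftPart lam j) T ∧
          ∀ i k, k < shiftPart lam j i → T i k ∉ S}) ∧
    {T : ℕ → ℕ → ℕ | IsSSYT lam r T ∧ ZeroOutside lam T ∧
        ∀ s ∈ S, HasIStrip lam (n - r) T s}.ncard
      = ssytCount (r - j) (shiftPart lam j) := by
  subst hj
  have hm : Mono lam := hp.1
  have hz : ∀ i, r ≤ i → lam i = 0 := hp.2
  have hfull : ∀ i, i < S.card → lam i = n - r := by
    intro i hi
    have hex : ∃ i0, i0 ∈ (Finset.range r).filter (fun i => lam i = n - r) ∧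
        S.card - 1 ≤ i0 := by
      by_contra hcon
      push_neg at hcon
      have hsubF : (Finset.range r).filter (fun i => lam i = n - r) ⊆
          Finset.range (S.card - 1) := fun x hx => Finset.mem_range.2 (by
        have := hcon x hx; omega)
      have := Finset.card_le_card hsubF
      rw [Finset.card_range] at this
      omega
    obtain ⟨i0, hi0f, hi0⟩ := hex
    rw [Finset.mem_filter] at hi0f
    have h2 : lam i0 ≤ lam i := hm i i0 (by omega)
    have h3 := hsub i
    omega
  obtain ⟨e1⟩ := mainEquiv (w := n - r) (r := r) S lam ∅ hS hm hz hsub hfull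
    (Finset.disjoint_empty_right S)
  have eqL : ∀ T : ℕ → ℕ → ℕ,
      (IsSSYT lam r T ∧ ZeroOutside lam T ∧ ∀ s ∈ S, HasIStrip lam (n - r) T s) ↔
      (Good lam r T ∧ (∀ v ∈ S, HasIStrip lam (n - r) T v) ∧ Avoids lam ∅ T) := by
    intro T
    constructor
    · rintro ⟨a, b, c⟩
      exact ⟨⟨a, b⟩, c, fun i k _ => Finset.notMem_empty _⟩
    · rintro ⟨⟨a, b⟩, c, -⟩
      exact ⟨a, b, c⟩
  have eqR : ∀ T : ℕ → ℕ → ℕ,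
      (Good (shiftPart lam S.card) r T ∧ Avoids (shiftPart lam S.card) (S ∪ ∅) T) ↔
      (IsSSYT (shiftPart lam S.card) r T ∧ ZeroOutside (shiftPart lam S.card) T ∧
        ∀ i k, k < shiftPart lam S.card i → T i k ∉ S) := by
    intro T
    rw [Finset.union_empty]
    constructor
    · rintro ⟨⟨a, b⟩, c⟩
      exact ⟨a, b, c⟩
    · rintro ⟨a, b, c⟩
      exact ⟨⟨a, b⟩, c⟩
  have e1' := (Equiv.subtypeEquivRight eqL).trans (e1.trans (Equiv.subtypeEquivRight eqR))
  refine ⟨⟨e1'⟩, ?_⟩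
  obtain ⟨e2⟩ := relabelEquiv (shiftPart lam S.card) (fun a b hab => hm _ _ (by omega))
    S hS rfl
  rw [ssytCount, ← Nat.card_coe_set_eq, ← Nat.card_coe_set_eq]
  refine Nat.card_congr ?_
  exact (Equiv.subtypeEquivRight eqL).trans (e1.trans
    ((Equiv.subtypeEquivRight (fun T => by
        rw [Finset.union_empty])).trans e2))
end

section
/- Fix integers r < n and a partition μ ⊆ (n-1)^r filled as an SSYT with entries in {1,...,r}; suppose for some i ∈ {1,...,r-1} the tableau contains both an (i-1,i)-strip and an (i,i+1)-strip that share a common box. Then every column of μ contains the entry i, so entry i appears exactly once per column; in particular the i-weight equals the number of columns of μ. -/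
lemma col_strict (μ : ℕ → ℕ) (r : ℕ) (T : ℕ → ℕ → ℕ) (hp : IsPartition r μ)
    (hT : IsSSYT μ r T) : ∀ a a' j, a < a' → j < μ a' → T a j < T a' j := by
  intro a a' j h hj
  induction a' with
  | zero => omega
  | succ b ih =>
    rcases Nat.lt_succ_iff_lt_or_eq.mp h with h' | h'
    · exact lt_trans (ih h' (lt_of_lt_of_le hj (hp.1 b (b+1) (Nat.le_succ b))))
        (hT.2.2 b j hj)
    · subst h'; exact hT.2.2 a j hj

lemma row_unique (μ : ℕ → ℕ) (r : ℕ) (T : ℕ → ℕ → ℕ) (hp : IsPartition r μ)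
    (hT : IsSSYT μ r T) (a a' j : ℕ) (ha : j < μ a) (ha' : j < μ a')
    (he : T a j = T a' j) : a = a' := by
  rcases lt_trichotomy a a' with h | h | h
  · exact absurd he (Nat.ne_of_lt (col_strict μ r T hp hT a a' j h ha'))
  · exact h
  · exact absurd he.symm (Nat.ne_of_lt (col_strict μ r T hp hT a' a j h ha))

/-- If an SSYT of shape `μ ⊆ (n-1)^r` contains an `(i-1,i)`-strip and an `(i,i+1)`-strip
sharing a common box, then every column of `μ` contains the entry `i`; in particular the
`i`-weight equals `n-1`, the number of columns of `μ`. -/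
theorem stmt5 (n r : ℕ) (hrn : r < n) (μ : ℕ → ℕ) (hp : IsPartition r μ)
    (hsub : ∀ i, μ i ≤ n - 1)
    (T : ℕ → ℕ → ℕ) (hT : IsSSYT μ r T) (hz : ZeroOutside μ T)
    (i : ℕ) (hi1 : 1 ≤ i) (hi2 : i ≤ r - 1)
    (f g : ℕ → ℕ) (m m' : ℕ)
    (hstrip1 : IsIIStrip μ (n - 1) T (i - 1) f m)
    (hstrip2 : IsIIStrip μ (n - 1) T i g m')
    (j₀ : ℕ) (hj₀ : j₀ < n - 1) (hshare : f j₀ = g j₀) :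
    (∀ j, j < n - 1 → ∃ a, j < μ a ∧ T a j = i) ∧ μ 0 = n - 1 ∧ wgt μ T i = n - 1 := by

  obtain ⟨hm1, hf1, hbf, hfi1, hfi2⟩ := hstrip1
  obtain ⟨hm2, hg1, hbg, hgi1, hgi2⟩ := hstrip2
  have hi' : i - 1 + 1 = i := by omega
  rw [hi'] at hfi2
  -- the shared box carries entry i, hence m ≤ j₀ < m'
  have hmj : m ≤ j₀ := by
    by_contra h
    push_neg at h
    have e1 : T (f j₀) j₀ = i - 1 := hfi1 j₀ h
    rcases le_or_gt m' j₀ with h' | h'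
    · have e2 : T (g j₀) j₀ = i + 1 := hgi2 j₀ h' hj₀
      rw [hshare, e2] at e1; omega
    · have e2 : T (g j₀) j₀ = i := hgi1 j₀ h'
      rw [hshare, e2] at e1; omega
  have hmj' : j₀ < m' := by
    by_contra h
    push_neg at h
    have e1 : T (f j₀) j₀ = i := hfi2 j₀ hmj hj₀
    have e2 : T (g j₀) j₀ = i + 1 := hgi2 j₀ h hj₀
    rw [hshare, e2] at e1; omega
  -- every column contains entry i
  have h1 : ∀ j, j < n - 1 → ∃ a, j < μ a ∧ T a j = i := by
    intro j hj
    rcases le_or_gt m j with h | h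
    · exact ⟨f j, hbf j hj, hfi2 j h hj⟩
    · exact ⟨g j, hbg j hj, hgi1 j (by omega)⟩
  have h2 : μ 0 = n - 1 := by
    have hle := hsub 0
    rcases Nat.eq_zero_or_pos (n - 1) with h | h
    · omega
    · obtain ⟨a, ha, -⟩ := h1 (n - 2) (by omega)
      have := hp.1 0 a (Nat.zero_le a)
      omega
  refine ⟨h1, h2, ?_⟩
  -- choose a witness row in each column
  have h1' : ∀ j, ∃ a, j < n - 1 → j < μ a ∧ T a j = i := by
    intro j
    by_cases h : j < n - 1
    · obtain ⟨a, ha⟩ := h1 j h; exact ⟨a, fun _ => ha⟩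
    · exact ⟨0, fun h' => absurd h' h⟩
  choose a ha using h1'
  have hS : {p : ℕ × ℕ | p.2 < μ p.1 ∧ T p.1 p.2 = i}
      = (fun j => (a j, j)) '' Set.Iio (n - 1) := by
    ext p
    constructor
    · rintro ⟨hb, he⟩
      have hjlt : p.2 < n - 1 := lt_of_lt_of_le hb (hsub p.1)
      obtain ⟨ha1, ha2⟩ := ha p.2 hjlt
      have : p.1 = a p.2 :=
        row_unique μ r T hp hT p.1 (a p.2) p.2 hb ha1 (he.trans ha2.symm)
      exact ⟨p.2, hjlt, by simp [← this]⟩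
    · rintro ⟨j, hj, rfl⟩
      obtain ⟨ha1, ha2⟩ := ha j hj
      exact ⟨ha1, ha2⟩
  have hinj : Set.InjOn (fun j => (a j, j)) (Set.Iio (n - 1)) := by
    intro x _ y _ h
    simpa using congrArg Prod.snd h
  rw [wgt, hS, Set.ncard_image_of_injOn hinj,
    show Set.Iio (n - 1) = ↑(Finset.Iio (n - 1)) from (Finset.coe_Iio _).symm,
    Set.ncard_coe_finset, Nat.card_Iio]
end

section
/- Let T be a standard Young tableau of shape λ with descent set {i₁ < ... < i_{r-1}}, and T' the SSYT obtained by replacing the entries in (i_{j-1}, i_j] with j (setting i₀ = 0, i_r = |λ|). Then for each j ∈ {1,...,r-1}, the rightmost box of T' containing entry j does not lie in a column strictly to the left of the leftmost box of T' containing entry j+1. -/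
/-!
The entry `d v + 1` sits in a strictly lower row than `d v`, since `d v` is a descent of `T`.
If it also sat in a column strictly to the right, then the entry of `T` in the row of `d v` and
the column of `d v + 1` would lie strictly between `d v` and `d v + 1`. The `T'`-entry of the
box `(i, j)` is `#{t | d t < T i j} + 1`, so these two boxes carry the entries `v` and `v + 1`.
-/

open Finset

theorem card_filter_lt_apply_of_strictMonoOn {d : ℕ → ℕ} {n v : ℕ}
    (hd : StrictMonoOn d (Set.Icc 1 n)) (hv : v ∈ Set.Icc 1 n) :
    ((Icc 1 n).filter (fun t => d t < d v)).card = v - 1 := by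
  have : (Icc 1 n).filter (fun t => d t < d v) = Ico 1 v := by
    ext t
    simp only [mem_filter, mem_Icc, mem_Ico]
    constructor
    · rintro ⟨ht, hlt⟩
      exact ⟨ht.1, (hd.lt_iff_lt ht hv).1 hlt⟩
    · rintro ⟨ht, hlt⟩
      have ht' : t ∈ Set.Icc 1 n := ⟨ht, hlt.le.trans hv.2⟩
      exact ⟨ht', (hd.lt_iff_lt ht' hv).2 hlt⟩
  rw [this, Nat.card_Ico]

theorem card_filter_le_apply_of_strictMonoOn {d : ℕ → ℕ} {n v : ℕ}
    (hd : StrictMonoOn d (Set.Icc 1 n)) (hv : v ∈ Set.Icc 1 n) :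
    ((Icc 1 n).filter (fun t => d t ≤ d v)).card = v := by
  have : (Icc 1 n).filter (fun t => d t ≤ d v) = Icc 1 v := by
    ext t
    simp only [mem_filter, mem_Icc]
    constructor
    · rintro ⟨ht, hle⟩
      exact ⟨ht.1, (hd.le_iff_le ht hv).1 hle⟩
    · rintro ⟨ht, hle⟩
      have ht' : t ∈ Set.Icc 1 n := ⟨ht, hle.trans hv.2⟩
      exact ⟨ht', (hd.le_iff_le ht' hv).2 hle⟩
  rw [this, Nat.card_Icc, Nat.add_sub_cancel]

namespace IsSYT

variable {μ : ℕ → ℕ} {N : ℕ} {T : ℕ → ℕ → ℕ}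

theorem strictMonoOn_row (hT : IsSYT μ N T) (i : ℕ) : StrictMonoOn (T i) (Set.Iio (μ i)) :=
  strictMonoOn_of_lt_add_one Set.ordConnected_Iio fun a _ _ ha => hT.2.2.1 i a ha

theorem strictMonoOn_col (hT : IsSYT μ N T) (hμ : Antitone μ) {b c : ℕ} (hc : c < μ b) :
    StrictMonoOn (fun a => T a c) (Set.Iic b) :=
  strictMonoOn_of_lt_add_one Set.ordConnected_Iic fun a _ _ ha =>
    hT.2.2.2 a c (hc.trans_le (hμ ha))

theorem col_le_of_lower_row_eq_add_one (hT : IsSYT μ N T) (hμ : Antitone μ)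
    {i j i' j' : ℕ} (hj : j < μ i) (hj' : j' < μ i') (hi : i < i')
    (hsucc : T i' j' = T i j + 1) : j' ≤ j := by
  by_contra! hjj'
  have hj'i : j' < μ i := hj'.trans_le (hμ hi.le)
  have hrow : T i j < T i j' := hT.strictMonoOn_row i hj hj'i hjj'
  have hcol : T i j' < T i' j' :=
    hT.strictMonoOn_col hμ hj' (Set.mem_Iic.2 hi.le) (Set.mem_Iic.2 le_rfl) hi
  omega

end IsSYT

theorem stmt9_general (R : ℕ) (lam : ℕ → ℕ) (hp : IsPartition R lam)
    (N : ℕ) (T : ℕ → ℕ → ℕ) (hT : IsSYT lam N T)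
    (r : ℕ) (d : ℕ → ℕ)
    (hdmono : ∀ s t, 1 ≤ s → s < t → t ≤ r - 1 → d s < d t)
    (hdesc : ∀ k, IsDescent lam T k ↔ ∃ t, 1 ≤ t ∧ t ≤ r - 1 ∧ d t = k) :
    ∀ v, 1 ≤ v → v ≤ r - 1 → ∃ i₁ j₁ i₂ j₂, j₁ < lam i₁ ∧ j₂ < lam i₂ ∧
      ((Finset.Icc 1 (r - 1)).filter (fun t => d t < T i₁ j₁)).card + 1 = v ∧
      ((Finset.Icc 1 (r - 1)).filter (fun t => d t < T i₂ j₂)).card + 1 = v + 1 ∧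
      j₂ ≤ j₁ := by
  intro v hv1 hv2
  have hd : StrictMonoOn d (Set.Icc 1 (r - 1)) := fun s hs t ht hst => hdmono s t hs.1 hst ht.2
  have hv : v ∈ Set.Icc 1 (r - 1) := ⟨hv1, hv2⟩
  obtain ⟨i, j, i', j', hj, hj', hTij, hTij', hi⟩ := (hdesc (d v)).2 ⟨v, hv1, hv2, rfl⟩
  refine ⟨i, j, i', j', hj, hj', ?_, ?_,
    hT.col_le_of_lower_row_eq_add_one (fun _ _ h => hp.1 _ _ h) hj hj' hi (by rw [hTij, hTij'])⟩
  · rw [hTij, card_filter_lt_apply_of_strictMonoOn hd hv]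
    omega
  · simp only [hTij', Nat.lt_add_one_iff]
    rw [card_filter_le_apply_of_strictMonoOn hd hv]

/-- With `T'` the SSYT obtained from an SYT `T` of shape `lam` by replacing the entries in
`(d (j-1), d j]` by `j`: for each `v ∈ {1,…,r-1}`, the rightmost box of `T'` containing
`v` does not lie in a column strictly left of the leftmost box containing `v+1`;
equivalently there are boxes with entries `v` and `v+1` whose columns satisfy `j₂ ≤ j₁`. -/
theorem stmt9 (R : ℕ) (lam : ℕ → ℕ) (hp : IsPartition R lam)
    (N : ℕ) (hN : N = ∑ i ∈ Finset.range R, lam i) (hN1 : 1 ≤ N)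
    (T : ℕ → ℕ → ℕ) (hT : IsSYT lam N T) (hz : ZeroOutside lam T)
    (r : ℕ) (hr : 1 ≤ r) (d : ℕ → ℕ)
    (hdmono : ∀ s t, 1 ≤ s → s < t → t ≤ r - 1 → d s < d t)
    (hdrange : ∀ t, 1 ≤ t → t ≤ r - 1 → 1 ≤ d t ∧ d t < N)
    (hdesc : ∀ k, IsDescent lam T k ↔ ∃ t, 1 ≤ t ∧ t ≤ r - 1 ∧ d t = k) :
    ∀ v, 1 ≤ v → v ≤ r - 1 → ∃ i₁ j₁ i₂ j₂, j₁ < lam i₁ ∧ j₂ < lam i₂ ∧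
      ((Finset.Icc 1 (r - 1)).filter (fun t => d t < T i₁ j₁)).card + 1 = v ∧
      ((Finset.Icc 1 (r - 1)).filter (fun t => d t < T i₂ j₂)).card + 1 = v + 1 ∧
      j₂ ≤ j₁ :=
  stmt9_general R lam hp N T hT r d hdmono hdesc
end

section
/- Let T' be an SSYT of shape λ with entries in {1,...,r} such that (a) every entry of {1,...,r} appears at least once, and (b) for each j ∈ {1,...,r-1} the rightmost occurrence of entry j is not in a column strictly left of the leftmost occurrence of entry j+1 (hence is in a strictly higher row than it). Order the boxes by entry value, and among equal entries from left to right, and fill the k-th box in this order with k; the resulting filling T is a standard Young tableau of shape λ with exactly r-1 descents. -/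
/-
Rank the boxes by the key `(T' box, column)`, ordered lexicographically: `T` is that rank plus one.
In an SSYT the key is injective and increases along rows and down columns, so `T` is standard.
If consecutive ranks sit in rows going strictly down, the key must jump from the rightmost box of
an entry `v` to the leftmost box of `v + 1` (every entry occurs, and equal entries rise to the
right); conversely hypothesis (b) puts that leftmost box weakly left of, hence strictly below,
that rightmost box. So the descents are exactly the numbers `#{boxes with entry ≤ v}` for
`1 ≤ v ≤ r - 1`, and these are distinct because every entry occurs.
-/

open Finset

section Rank

variable {α β : Type*} [LinearOrder β]

def rankIn (s : Finset α) (f : α → β) (a : α) : ℕ := #{b ∈ s | f b < f a}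

variable {s : Finset α} {f : α → β} {a b : α}

lemma filter_lt_subset_filter_lt (h : f a ≤ f b) :
    ({c ∈ s | f c < f a} : Finset α) ⊆ {c ∈ s | f c < f b} := by
  intro c
  simp only [mem_filter]
  exact fun ⟨hc, hca⟩ => ⟨hc, hca.trans_le h⟩

lemma rankIn_le_rankIn (h : f a ≤ f b) : rankIn s f a ≤ rankIn s f b :=
  card_le_card (filter_lt_subset_filter_lt h)

lemma rankIn_lt_rankIn (ha : a ∈ s) (h : f a < f b) : rankIn s f a < rankIn s f b :=
  card_lt_card ((ssubset_iff_of_subset (filter_lt_subset_filter_lt h.le)).2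
    ⟨a, by simp [ha, h], by simp⟩)

lemma rankIn_lt_card (ha : a ∈ s) : rankIn s f a < #s :=
  card_lt_card ((ssubset_iff_of_subset (filter_subset _ _)).2 ⟨a, ha, by simp⟩)

lemma rankIn_lt_rankIn_iff (ha : a ∈ s) : rankIn s f a < rankIn s f b ↔ f a < f b :=
  ⟨fun h => lt_of_not_ge fun h' => (rankIn_le_rankIn h').not_gt h, rankIn_lt_rankIn ha⟩

lemma rankIn_injOn (hf : Set.InjOn f s) : Set.InjOn (rankIn s f) s := by
  intro a ha b hb h
  refine hf ha hb (le_antisymm ?_ ?_)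
  · exact le_of_not_gt fun h' => (rankIn_lt_rankIn hb h').ne' h
  · exact le_of_not_gt fun h' => (rankIn_lt_rankIn ha h').ne h

lemma rankIn_eq_rankIn_add_one [DecidableEq α] (hf : Set.InjOn f s) (ha : a ∈ s)
    (hab : f a < f b) (hgap : ∀ c ∈ s, f a < f c → f b ≤ f c) : rankIn s f b = rankIn s f a + 1 := by
  have : ({c ∈ s | f c < f b} : Finset α) = insert a {c ∈ s | f c < f a} := by
    ext c
    simp only [mem_insert, mem_filter]
    constructor
    · rintro ⟨hc, hcb⟩
      rcases lt_trichotomy (f c) (f a) with h | h | h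
      · exact Or.inr ⟨hc, h⟩
      · exact Or.inl (hf hc ha h)
      · exact absurd (hgap c hc h) (not_le.2 hcb)
    · rintro (rfl | ⟨hc, h⟩)
      · exact ⟨ha, hab⟩
      · exact ⟨hc, h.trans hab⟩
  rw [rankIn, rankIn, this, card_insert_of_notMem (by simp)]

end Rank

section YoungDiagram

variable {R r : ℕ} {μ : ℕ → ℕ} {T : ℕ → ℕ → ℕ}

def youngCells (R : ℕ) (μ : ℕ → ℕ) : Finset (ℕ × ℕ) :=
  (range R).biUnion fun i => {i} ×ˢ range (μ i)

lemma mem_youngCells (hμ : ∀ i, R ≤ i → μ i = 0) {p : ℕ × ℕ} :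
    p ∈ youngCells R μ ↔ p.2 < μ p.1 := by
  simp only [youngCells, mem_biUnion, mem_product, mem_singleton, mem_range]
  constructor
  · rintro ⟨i, -, rfl, h⟩
    exact h
  · intro h
    refine ⟨p.1, ?_, rfl, h⟩
    by_contra hR
    rw [hμ p.1 (not_lt.1 hR)] at h
    exact Nat.not_lt_zero _ h

lemma card_youngCells : #(youngCells R μ) = ∑ i ∈ range R, μ i := by
  rw [youngCells, card_biUnion]
  · simp
  · intro i _ j _ hij
    simp only [Function.onFun, disjoint_left, mem_product, mem_singleton]
    rintro p ⟨rfl, -⟩ ⟨h, -⟩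
    exact hij h

lemma IsSSYT.lt_of_row_lt (hμ : Antitone μ) (hT : IsSSYT μ r T) {i i' j : ℕ} (hi : i < i')
    (hj : j < μ i') : T i j < T i' j := by
  induction i', hi using Nat.le_induction with
  | base => exact hT.2.2 i j hj
  | succ n hn ih => exact (ih (hj.trans_le (hμ n.le_succ))).trans (hT.2.2 n j hj)

lemma IsSSYT.entry_lt_of_lt_of_le (hμ : Antitone μ) (hT : IsSSYT μ r T) {i i' j j' : ℕ}
    (hi : i < i') (hj : j ≤ j') (hj' : j' < μ i') : T i j < T i' j' :=
  (hT.lt_of_row_lt hμ hi (hj.trans_lt hj')).trans_le (hT.2.1 i' j j' hj hj')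

lemma IsSSYT.entry_le_of_le (hμ : Antitone μ) (hT : IsSSYT μ r T) {i i' j j' : ℕ}
    (hi : i ≤ i') (hj : j ≤ j') (hj' : j' < μ i') : T i j ≤ T i' j' := by
  rcases hi.lt_or_eq with hi | rfl
  · exact (hT.entry_lt_of_lt_of_le hμ hi hj hj').le
  · exact hT.2.1 i j j' hj hj'

def readingKey (T : ℕ → ℕ → ℕ) (p : ℕ × ℕ) : ℕ ×ₗ ℕ := toLex (T p.1 p.2, p.2)

lemma readingKey_lt_iff {p q : ℕ × ℕ} : readingKey T p < readingKey T q ↔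
    T p.1 p.2 < T q.1 q.2 ∨ T p.1 p.2 = T q.1 q.2 ∧ p.2 < q.2 :=
  Prod.Lex.toLex_lt_toLex

lemma readingKey_le_iff_of_eq {p q : ℕ × ℕ} (h : T p.1 p.2 = T q.1 q.2) :
    readingKey T p ≤ readingKey T q ↔ p.2 ≤ q.2 := by
  simp [readingKey, Prod.Lex.toLex_le_toLex, h]

lemma readingKey_lt_of_lt {p q : ℕ × ℕ} (h : T p.1 p.2 < T q.1 q.2) :
    readingKey T p < readingKey T q :=
  readingKey_lt_iff.2 (Or.inl h)

lemma readingKey_lt_of_le_of_lt {p q : ℕ × ℕ} (h : T p.1 p.2 ≤ T q.1 q.2)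
    (hcol : p.2 < q.2) : readingKey T p < readingKey T q :=
  readingKey_lt_iff.2 (h.lt_or_eq.imp_right fun h => ⟨h, hcol⟩)

lemma IsSSYT.readingKey_injOn (hμ : Antitone μ) (hT : IsSSYT μ r T) :
    Set.InjOn (readingKey T) {p | p.2 < μ p.1} := by
  rintro ⟨i, j⟩ hp ⟨i', j'⟩ hq h
  obtain ⟨hentry, rfl⟩ : T i j = T i' j' ∧ j = j' := by simpa [readingKey] using h
  rcases lt_trichotomy i i' with hi | rfl | hi
  · exact absurd hentry (hT.lt_of_row_lt hμ hi hq).ne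
  · rfl
  · exact absurd hentry (hT.lt_of_row_lt hμ hi hp).ne'

lemma IsSSYT.entry_lt_of_readingKey_lt (hμ : Antitone μ) (hT : IsSSYT μ r T) {p q : ℕ × ℕ}
    (hq : q.2 < μ q.1) (hkey : readingKey T p < readingKey T q) (hrow : p.1 < q.1) :
    T p.1 p.2 < T q.1 q.2 := by
  rcases readingKey_lt_iff.1 hkey with h | ⟨h, hcol⟩
  · exact h
  · exact absurd h (hT.entry_lt_of_lt_of_le hμ hrow hcol.le hq).ne

lemma IsSSYT.row_lt_of_entry_lt (hμ : Antitone μ) (hT : IsSSYT μ r T) {p q : ℕ × ℕ}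
    (hp : p.2 < μ p.1) (hcol : q.2 ≤ p.2) (h : T p.1 p.2 < T q.1 q.2) : p.1 < q.1 :=
  lt_of_not_ge fun hrow => (hT.entry_le_of_le hμ hrow hcol hp).not_gt h

end YoungDiagram

section ReadingOrder

def AllEntriesOccur (μ : ℕ → ℕ) (r : ℕ) (T : ℕ → ℕ → ℕ) : Prop :=
  ∀ v, 1 ≤ v → v ≤ r → ∃ i j, j < μ i ∧ T i j = v

def EntrySuccessorsWeaklyLeft (μ : ℕ → ℕ) (r : ℕ) (T : ℕ → ℕ → ℕ) : Prop :=
  ∀ v, 1 ≤ v → v ≤ r - 1 → ∃ i₁ j₁ i₂ j₂, j₁ < μ i₁ ∧ j₂ < μ i₂ ∧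
    T i₁ j₁ = v ∧ T i₂ j₂ = v + 1 ∧ j₂ ≤ j₁

variable {R r : ℕ} {lam : ℕ → ℕ} {T' T : ℕ → ℕ → ℕ}

lemma ncard_readingKey_lt_eq_rankIn (hlam : ∀ i, R ≤ i → lam i = 0) (p : ℕ × ℕ) :
    {q : ℕ × ℕ | q.2 < lam q.1 ∧ (T' q.1 q.2 < T' p.1 p.2 ∨
      (T' q.1 q.2 = T' p.1 p.2 ∧ q.2 < p.2))}.ncard =
      rankIn (youngCells R lam) (readingKey T') p := by
  rw [rankIn, ← Set.ncard_coe_finset]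
  congr 1
  ext q
  simp [mem_youngCells hlam, readingKey_lt_iff]

lemma isSYT_of_eq_rankIn_add_one (hp : IsPartition R lam) (hT' : IsSSYT lam r T')
    (hT : ∀ p ∈ youngCells R lam, T p.1 p.2 = rankIn (youngCells R lam) (readingKey T') p + 1) :
    IsSYT lam (∑ i ∈ range R, lam i) T := by
  have hmem (p : ℕ × ℕ) : p ∈ youngCells R lam ↔ p.2 < lam p.1 := mem_youngCells hp.2
  refine ⟨fun i j hj => ?_, fun i j i' j' hj hj' h => ?_, fun i j hj => ?_, fun i j hj => ?_⟩
  · have := rankIn_lt_card (f := readingKey T') ((hmem (i, j)).2 hj)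
    rw [hT (i, j) ((hmem _).2 hj), ← card_youngCells]
    omega
  · rw [hT (i, j) ((hmem _).2 hj), hT (i', j') ((hmem _).2 hj')] at h
    exact rankIn_injOn ((hT'.readingKey_injOn hp.1).mono fun p hp => (hmem p).1 hp)
      ((hmem _).2 hj) ((hmem _).2 hj') (by omega)
  · have hj₀ : j < lam i := by omega
    rw [hT (i, j) ((hmem _).2 hj₀), hT (i, j + 1) ((hmem _).2 hj)]
    exact Nat.add_lt_add_right (rankIn_lt_rankIn ((hmem _).2 hj₀)
      (readingKey_lt_of_le_of_lt (hT'.2.1 i j (j + 1) j.le_succ hj) j.lt_succ_self)) 1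
  · have hj₀ : j < lam i := hj.trans_le (hp.1 _ _ i.le_succ)
    rw [hT (i, j) ((hmem _).2 hj₀), hT (i + 1, j) ((hmem _).2 hj)]
    exact Nat.add_lt_add_right (rankIn_lt_rankIn ((hmem _).2 hj₀)
      (readingKey_lt_of_lt (hT'.2.2 i j hj))) 1

lemma rankIn_readingKey_eq_card_entry_le {s : Finset (ℕ × ℕ)} {q : ℕ × ℕ} {v : ℕ}
    (hv : T q.1 q.2 = v + 1)
    (hmin : ∀ c ∈ s, T c.1 c.2 = v + 1 → readingKey T q ≤ readingKey T c) :
    rankIn s (readingKey T) q = #{c ∈ s | T c.1 c.2 ≤ v} := by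
  refine congrArg card (filter_congr fun c hc => ?_)
  rw [readingKey_lt_iff, hv]
  constructor
  · rintro (h | ⟨h, hcol⟩)
    · omega
    · exact absurd (hmin c hc h) (not_le.2 (readingKey_lt_of_le_of_lt (by omega) hcol))
  · intro h
    exact Or.inl (by omega)

lemma card_entry_le_lt_card_entry_le (hlam : ∀ i, R ≤ i → lam i = 0)
    (hall : AllEntriesOccur lam r T') {v w : ℕ} (hvw : v < w) (hw : w ≤ r) :
    #{c ∈ youngCells R lam | T' c.1 c.2 ≤ v} <
      #{c ∈ youngCells R lam | T' c.1 c.2 ≤ w} := by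
  obtain ⟨i, j, hj, hij⟩ := hall (v + 1) (by omega) (by omega)
  refine card_lt_card ((ssubset_iff_of_subset ?_).2 ⟨(i, j), ?_, ?_⟩)
  · intro c
    simp only [mem_filter]
    exact fun ⟨hc, h⟩ => ⟨hc, h.trans hvw.le⟩
  · simp only [mem_filter, mem_youngCells hlam, hij]
    omega
  · simp [hij]

lemma exists_card_entry_le_eq_rankIn (hp : IsPartition R lam) (hT' : IsSSYT lam r T')
    (hall : AllEntriesOccur lam r T') {p q : ℕ × ℕ}
    (hpc : p ∈ youngCells R lam) (hqc : q ∈ youngCells R lam)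
    (hrank : rankIn (youngCells R lam) (readingKey T') q =
      rankIn (youngCells R lam) (readingKey T') p + 1) (hrow : p.1 < q.1) :
    ∃ v ∈ Icc 1 (r - 1), #{c ∈ youngCells R lam | T' c.1 c.2 ≤ v} =
      rankIn (youngCells R lam) (readingKey T') q := by
  have hmem (p : ℕ × ℕ) : p ∈ youngCells R lam ↔ p.2 < lam p.1 := mem_youngCells hp.2
  have hkey : readingKey T' p < readingKey T' q := (rankIn_lt_rankIn_iff hpc).1 (by omega)
  have hgap : ∀ c ∈ youngCells R lam, readingKey T' p < readingKey T' c →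
      readingKey T' q ≤ readingKey T' c := fun c hc h => le_of_not_gt fun h' => by
    have := rankIn_lt_rankIn hpc h
    have := rankIn_lt_rankIn hc h'
    omega
  have hlt := hT'.entry_lt_of_readingKey_lt hp.1 ((hmem q).1 hqc) hkey hrow
  have hq_le := (hT'.1 q.1 q.2 ((hmem q).1 hqc)).2
  have hsucc : T' q.1 q.2 = T' p.1 p.2 + 1 := by
    by_contra hne
    obtain ⟨i, j, hj, hij⟩ := hall (T' p.1 p.2 + 1) (by omega) (by omega)
    exact (hgap (i, j) ((hmem _).2 hj) (readingKey_lt_of_lt (by simp only; omega))).not_gt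
      (readingKey_lt_of_lt (by simp only; omega))
  refine ⟨T' p.1 p.2, mem_Icc.2 ⟨(hT'.1 p.1 p.2 ((hmem p).1 hpc)).1, by omega⟩, ?_⟩
  exact (rankIn_readingKey_eq_card_entry_le hsucc fun c hc hcv =>
    hgap c hc (readingKey_lt_of_lt (by omega))).symm

/-- Condition (b) is what makes the rightmost `v` and the leftmost `v + 1` a descent pair. -/
lemma exists_rankIn_eq_card_entry_le (hp : IsPartition R lam) (hT' : IsSSYT lam r T')
    (hcond : EntrySuccessorsWeaklyLeft lam r T') {v : ℕ} (hv : v ∈ Icc 1 (r - 1)) :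
    ∃ p ∈ youngCells R lam, ∃ q ∈ youngCells R lam, p.1 < q.1 ∧
      rankIn (youngCells R lam) (readingKey T') q =
        rankIn (youngCells R lam) (readingKey T') p + 1 ∧
      rankIn (youngCells R lam) (readingKey T') q =
        #{c ∈ youngCells R lam | T' c.1 c.2 ≤ v} := by
  have hmem (p : ℕ × ℕ) : p ∈ youngCells R lam ↔ p.2 < lam p.1 := mem_youngCells hp.2
  obtain ⟨hv1, hvr⟩ := mem_Icc.1 hv
  obtain ⟨i₁, j₁, i₂, j₂, hj₁, hj₂, hv₁, hv₂, hj⟩ := hcond v hv1 hvr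
  obtain ⟨p, hpv, hpmax⟩ := exists_max_image {c ∈ youngCells R lam | T' c.1 c.2 = v}
    (readingKey T') ⟨(i₁, j₁), by simp [hmem, hj₁, hv₁]⟩
  obtain ⟨q, hqv, hqmin⟩ := exists_min_image {c ∈ youngCells R lam | T' c.1 c.2 = v + 1}
    (readingKey T') ⟨(i₂, j₂), by simp [hmem, hj₂, hv₂]⟩
  simp only [mem_filter] at hpv hqv hpmax hqmin
  have hpcol : j₁ ≤ p.2 :=
    (readingKey_le_iff_of_eq (p := (i₁, j₁)) (hv₁.trans hpv.2.symm)).1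
      (hpmax _ ⟨(hmem _).2 hj₁, hv₁⟩)
  have hqcol : q.2 ≤ j₂ :=
    (readingKey_le_iff_of_eq (q := (i₂, j₂)) (hqv.2.trans hv₂.symm)).1
      (hqmin _ ⟨(hmem _).2 hj₂, hv₂⟩)
  have hrow : p.1 < q.1 :=
    hT'.row_lt_of_entry_lt hp.1 ((hmem p).1 hpv.1) (by omega) (by omega)
  have hgap : ∀ c ∈ youngCells R lam, readingKey T' p < readingKey T' c →
      readingKey T' q ≤ readingKey T' c := by
    intro c hc hpc
    rcases readingKey_lt_iff.1 hpc with h | ⟨h, -⟩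
    · rcases (show T' c.1 c.2 = v + 1 ∨ v + 1 < T' c.1 c.2 by omega) with h' | h'
      · exact hqmin c ⟨hc, h'⟩
      · exact (readingKey_lt_of_lt (by omega)).le
    · exact absurd (hpmax c ⟨hc, by omega⟩) (not_le.2 hpc)
  have hinj := (hT'.readingKey_injOn hp.1).mono fun c hc => (hmem c).1 hc
  refine ⟨p, hpv.1, q, hqv.1, hrow, ?_, ?_⟩
  · exact rankIn_eq_rankIn_add_one hinj hpv.1 (readingKey_lt_of_lt (by omega)) hgap
  · exact rankIn_readingKey_eq_card_entry_le hqv.2 fun c hc hcv => hqmin c ⟨hc, hcv⟩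

lemma setOf_isDescent_eq (hp : IsPartition R lam) (hT' : IsSSYT lam r T')
    (hall : AllEntriesOccur lam r T')
    (hcond : EntrySuccessorsWeaklyLeft lam r T')
    (hT : ∀ p ∈ youngCells R lam, T p.1 p.2 = rankIn (youngCells R lam) (readingKey T') p + 1) :
    {k | IsDescent lam T k} =
      ((Icc 1 (r - 1)).image fun v => #{c ∈ youngCells R lam | T' c.1 c.2 ≤ v} :
        Finset ℕ) := by
  have hmem (p : ℕ × ℕ) : p ∈ youngCells R lam ↔ p.2 < lam p.1 := mem_youngCells hp.2
  ext k
  simp only [Set.mem_ofPred_eq, coe_image, Set.mem_image, mem_coe]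
  constructor
  · rintro ⟨i, j, i', j', hj, hj', rfl, hk, hrow⟩
    rw [hT (i', j') ((hmem _).2 hj')] at hk
    rw [hT (i, j) ((hmem _).2 hj)] at hk ⊢
    obtain ⟨v, hv, hS⟩ := exists_card_entry_le_eq_rankIn hp hT' hall ((hmem (i, j)).2 hj)
      ((hmem (i', j')).2 hj') (by omega) hrow
    exact ⟨v, hv, by omega⟩
  · rintro ⟨v, hv, rfl⟩
    obtain ⟨p, hpc, q, hqc, hrow, hrank, hS⟩ := exists_rankIn_eq_card_entry_le hp hT' hcond hv
    exact ⟨p.1, p.2, q.1, q.2, (hmem p).1 hpc, (hmem q).1 hqc, by rw [hT p hpc]; omega,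
      by rw [hT q hqc]; omega, hrow⟩

lemma ncard_setOf_isDescent (hp : IsPartition R lam) (hT' : IsSSYT lam r T')
    (hall : AllEntriesOccur lam r T')
    (hcond : EntrySuccessorsWeaklyLeft lam r T')
    (hT : ∀ p ∈ youngCells R lam, T p.1 p.2 = rankIn (youngCells R lam) (readingKey T') p + 1) :
    {k | IsDescent lam T k}.ncard = r - 1 := by
  have hstrict : StrictMonoOn (fun v => #{c ∈ youngCells R lam | T' c.1 c.2 ≤ v})
      (Icc 1 (r - 1) : Finset ℕ) := fun v _ w hw hvw =>
    card_entry_le_lt_card_entry_le hp.2 hall hvw (by have := (mem_Icc.1 (mem_coe.1 hw)).2; omega)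
  rw [setOf_isDescent_eq hp hT' hall hcond hT, Set.ncard_coe_finset,
    card_image_of_injOn hstrict.injOn, Nat.card_Icc]
  omega

end ReadingOrder

theorem stmt18_general (R r : ℕ) (lam : ℕ → ℕ) (hp : IsPartition R lam)
    (T' : ℕ → ℕ → ℕ) (hT' : IsSSYT lam r T')
    (hall : ∀ v, 1 ≤ v → v ≤ r → ∃ i j, j < lam i ∧ T' i j = v)
    (hcond : ∀ v, 1 ≤ v → v ≤ r - 1 → ∃ i₁ j₁ i₂ j₂, j₁ < lam i₁ ∧ j₂ < lam i₂ ∧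
        T' i₁ j₁ = v ∧ T' i₂ j₂ = v + 1 ∧ j₂ ≤ j₁)
    (T : ℕ → ℕ → ℕ)
    (hTdef : ∀ i j, T i j = if j < lam i then
        ({q : ℕ × ℕ | q.2 < lam q.1 ∧ (T' q.1 q.2 < T' i j ∨
            (T' q.1 q.2 = T' i j ∧ q.2 < j))}.ncard + 1) else 0) :
    IsSYT lam (∑ i ∈ Finset.range R, lam i) T ∧
    {k : ℕ | IsDescent lam T k}.ncard = r - 1 := by
  have hT : ∀ p ∈ youngCells R lam,
      T p.1 p.2 = rankIn (youngCells R lam) (readingKey T') p + 1 := fun p hpc => by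
    rw [hTdef, if_pos ((mem_youngCells hp.2).1 hpc), ncard_readingKey_lt_eq_rankIn hp.2]
  exact ⟨isSYT_of_eq_rankIn_add_one hp hT' hT, ncard_setOf_isDescent hp hT' hall hcond hT⟩

/-- Let `T'` be an SSYT of shape `lam` with entries in `{1,…,r}` such that every entry
appears at least once and, for each `v ∈ {1,…,r-1}`, the rightmost occurrence of `v` is
not in a column strictly left of the leftmost occurrence of `v+1`.  Ordering the boxes by
entry value and, among equal entries, from left to right, and filling the `k`-th box with
`k` produces a standard Young tableau of shape `lam` with exactly `r-1` descents. -/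
theorem stmt18 (R r : ℕ) (hr : 1 ≤ r) (lam : ℕ → ℕ) (hp : IsPartition R lam)
    (T' : ℕ → ℕ → ℕ) (hT' : IsSSYT lam r T') (hz : ZeroOutside lam T')
    (hall : ∀ v, 1 ≤ v → v ≤ r → ∃ i j, j < lam i ∧ T' i j = v)
    (hcond : ∀ v, 1 ≤ v → v ≤ r - 1 → ∃ i₁ j₁ i₂ j₂, j₁ < lam i₁ ∧ j₂ < lam i₂ ∧
        T' i₁ j₁ = v ∧ T' i₂ j₂ = v + 1 ∧ j₂ ≤ j₁)
    (T : ℕ → ℕ → ℕ)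
    (hTdef : ∀ i j, T i j = if j < lam i then
        ({q : ℕ × ℕ | q.2 < lam q.1 ∧ (T' q.1 q.2 < T' i j ∨
            (T' q.1 q.2 = T' i j ∧ q.2 < j))}.ncard + 1) else 0) :
    IsSYT lam (∑ i ∈ Finset.range R, lam i) T ∧
    {k : ℕ | IsDescent lam T k}.ncard = r - 1 :=
  stmt18_general R r lam hp T' hT' hall hcond T hTdef
end
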